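/- arXiv:2307.09752 — 8 statements merged into one kernel-verified Lean document; each statement's English description precedes it below -/
import Mathlib

section
/- Let n and k be integers with 2 ≤ k and 2k + 2 ≤ n (so the Kneser graph K(n,k) is not an odd graph). Then there is no subset C of the k-subsets of an n-set Ω with |C| ≥ 2 such that C is 2-neighbour-transitive with minimum distance δ ≥ 5 in K(n,k). Concretely: if δ ≥ 5 and the setwise stabiliser of C in Sym(Ω) acts transitively on C, on C₁, and on C₂, a contradiction follows. -/
/-!
In a code with minimum distance at least 5, every vertex at distance 2 from a codeword `α`
lies in `C₂`, and `α` is the unique codeword within distance 2 of it. For `k ≥ 3` and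
`n ≥ 2k + 2` there are vertices `β`, `γ` at distance 2 from `α` with `|α ∩ β| = k - 1` and
`|α ∩ γ| = k - 2`. An automorphism of `C` mapping `β` to `γ` must therefore fix `α`, which
contradicts `|α ∩ β| ≠ |α ∩ γ|`. For `k ≤ 2` the Kneser graph has diameter at most 2, so no
code with minimum distance 5 exists at all.
-/

open Finset

abbrev KVert (Ω : Type*) [DecidableEq Ω] (k : ℕ) := {s : Finset Ω // s.card = k}

def kneser (Ω : Type*) [DecidableEq Ω] (k : ℕ) : SimpleGraph (KVert Ω k) where
  Adj a b := a ≠ b ∧ Disjoint a.1 b.1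
  symm := ⟨fun a b h => ⟨h.1.symm, h.2.symm⟩⟩
  loopless := ⟨fun a h => h.1 rfl⟩

/-- The action of a permutation of `Ω` on the vertices of the Kneser graph. -/
def permV {Ω : Type*} [DecidableEq Ω] {k : ℕ} (g : Equiv.Perm Ω) (a : KVert Ω k) : KVert Ω k :=
  ⟨a.1.map g.toEmbedding, by simp [a.2]⟩

/-- The setwise stabiliser of a code `C` inside `Sym(Ω)`. -/
def autC {Ω : Type*} [DecidableEq Ω] {k : ℕ} (C : Set (KVert Ω k)) : Set (Equiv.Perm Ω) :=
  {g | (permV g) '' C = C}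

/-- `nbrs C i` is `Cᵢ`, the set of vertices at distance exactly `i` from the code `C`. -/
def nbrs {Ω : Type*} [Fintype Ω] [DecidableEq Ω] {k : ℕ} (C : Set (KVert Ω k)) (i : ℕ) :
    Set (KVert Ω k) :=
  {γ | (∃ α ∈ C, (kneser Ω k).dist α γ = i) ∧ ∀ β ∈ C, i ≤ (kneser Ω k).dist β γ}

/-- `G` acts transitively on the set of vertices `S`. -/
def transOn {Ω : Type*} [DecidableEq Ω] {k : ℕ} (G : Set (Equiv.Perm Ω))
    (S : Set (KVert Ω k)) : Prop :=
  ∀ x ∈ S, ∀ y ∈ S, ∃ g ∈ G, permV g x = y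

open SimpleGraph

namespace SimpleGraph

variable {V W : Type*} {G : SimpleGraph V} {H : SimpleGraph W}

lemma Hom.edist_map_le (f : G →g H) (u v : V) : H.edist (f u) (f v) ≤ G.edist u v :=
  le_iInf fun p => (edist_le (p.map f)).trans (by rw [Walk.length_map])

lemma Iso.dist_map (f : G ≃g H) (u v : V) : H.dist (f u) (f v) = G.dist u v :=
  congrArg ENat.toNat <| le_antisymm (f.toHom.edist_map_le u v)
    (by simpa using f.symm.toHom.edist_map_le (f u) (f v))

lemma eq_of_dist_eq_two_of_dist_le_two {C : Set V}
    (hC : ∀ α ∈ C, ∀ β ∈ C, α ≠ β → 5 ≤ G.dist α β) {α β γ : V} (hα : α ∈ C) (hβ : β ∈ C)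
    (hαγ : G.dist α γ = 2) (hβγ : G.dist β γ ≤ 2) : α = β := by
  by_contra hne
  have h5 := hC α hα β hβ hne
  have htri := (Reachable.of_dist_ne_zero (by omega : G.dist α γ ≠ 0)).dist_triangle_left β
  rw [dist_comm (u := γ)] at htri
  omega

end SimpleGraph

namespace Kneser

variable {Ω : Type*} [DecidableEq Ω] {k : ℕ}

def permIso (g : Equiv.Perm Ω) : kneser Ω k ≃g kneser Ω k where
  toFun := permV g
  invFun := permV g⁻¹
  left_inv _ := Subtype.ext (by simp [permV, Finset.map_map])
  right_inv _ := Subtype.ext (by simp [permV, Finset.map_map])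
  map_rel_iff' := by simp [kneser, permV]

lemma dist_permV [Fintype Ω] (g : Equiv.Perm Ω) (a b : KVert Ω k) :
    (kneser Ω k).dist (permV g a) (permV g b) = (kneser Ω k).dist a b :=
  (permIso g).dist_map a b

lemma card_inter_permV (g : Equiv.Perm Ω) (a b : KVert Ω k) :
    #((permV g a).1 ∩ (permV g b).1) = #(a.1 ∩ b.1) := by
  simp only [permV, ← map_inter, card_map]

lemma permV_mem_of_mem_autC {C : Set (KVert Ω k)} {g : Equiv.Perm Ω} (hg : g ∈ autC C)
    {a : KVert Ω k} (ha : a ∈ C) : permV g a ∈ C :=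
  hg ▸ Set.mem_image_of_mem _ ha

lemma adj_of_disjoint {a b : KVert Ω k} (ha : a.1.Nonempty) (hab : Disjoint a.1 b.1) :
    (kneser Ω k).Adj a b :=
  ⟨fun h => ha.ne_empty (disjoint_self.mp (h ▸ hab)), hab⟩

variable [Fintype Ω]

lemma dist_eq_two {a b : KVert Ω k} (hne : a ≠ b) (hab : ¬Disjoint a.1 b.1)
    (hcard : #(a.1 ∪ b.1) + k ≤ Fintype.card Ω) : (kneser Ω k).dist a b = 2 := by
  obtain ⟨t, ht, htk⟩ := exists_subset_card_eq (s := (a.1 ∪ b.1)ᶜ) (n := k)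
    (by rw [card_compl]; omega)
  have htab : Disjoint t (a.1 ∪ b.1) := disjoint_of_subset_left ht disjoint_compl_left
  obtain ⟨x, hxa, hxb⟩ := not_disjoint_iff.mp hab
  have hadj_a : (kneser Ω k).Adj a ⟨t, htk⟩ :=
    adj_of_disjoint ⟨x, hxa⟩ (htab.mono_right subset_union_left).symm
  have hadj_b : (kneser Ω k).Adj b ⟨t, htk⟩ :=
    adj_of_disjoint ⟨x, hxb⟩ (htab.mono_right subset_union_right).symm
  have h2 : (kneser Ω k).edist a b = 2 := edist_eq_two_iff.mpr
    ⟨hne, fun h => hab h.2, ⟨_, (kneser Ω k).mem_commonNeighbors.mpr ⟨hadj_a, hadj_b⟩⟩⟩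
  simp [SimpleGraph.dist, h2]

lemma dist_le_two (hn : 3 * k ≤ Fintype.card Ω + 1) {a b : KVert Ω k} (hne : a ≠ b) :
    (kneser Ω k).dist a b ≤ 2 := by
  by_cases hab : Disjoint a.1 b.1
  · rw [dist_eq_one_iff_adj.mpr (show (kneser Ω k).Adj a b from ⟨hne, hab⟩)]
    omega
  · have hinter : 1 ≤ #(a.1 ∩ b.1) :=
      card_pos.mpr (not_disjoint_iff_nonempty_inter.mp hab)
    have := card_union_add_card_inter a.1 b.1
    rw [dist_eq_two hne hab (by rw [a.2, b.2] at this; omega)]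

lemma exists_dist_eq_two_card_inter (a : KVert Ω k) {m : ℕ} (hm : 1 ≤ m) (hmk : m < k)
    (hn : 2 * k + m ≤ Fintype.card Ω) :
    ∃ b : KVert Ω k, (kneser Ω k).dist a b = 2 ∧ #(a.1 ∩ b.1) = k - m := by
  obtain ⟨s, hsa, hs⟩ := exists_subset_card_eq (s := a.1) (n := k - m)
    (by rw [a.2]; omega)
  obtain ⟨t, hta, ht⟩ := exists_subset_card_eq (s := a.1ᶜ) (n := m)
    (by rw [card_compl, a.2]; omega)
  have hat : Disjoint a.1 t := disjoint_of_subset_right hta disjoint_compl_right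
  have hst : Disjoint s t := hat.mono_left hsa
  have hcard : #(s ∪ t) = k := by rw [card_union_of_disjoint hst]; omega
  have hinter : a.1 ∩ (s ∪ t) = s := by
    rw [inter_union_distrib_left, disjoint_iff_inter_eq_empty.mp hat, union_empty,
      inter_eq_right.mpr hsa]
  have hunion : a.1 ∪ (s ∪ t) = a.1 ∪ t := by
    rw [← union_assoc, union_eq_left.mpr hsa]
  refine ⟨⟨s ∪ t, hcard⟩, dist_eq_two ?_ ?_ ?_, by simp only [hinter, hs]⟩
  · obtain ⟨x, hx⟩ := card_pos.mp (by omega : 0 < #t)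
    intro h
    exact disjoint_left.mp hat (by rw [h]; exact mem_union_right _ hx) hx
  · rw [not_disjoint_iff_nonempty_inter, hinter, ← card_pos]; omega
  · rw [hunion, card_union_of_disjoint hat, a.2]; omega

lemma mem_nbrs_two_of_dist_eq_two {C : Set (KVert Ω k)}
    (hC : ∀ α ∈ C, ∀ β ∈ C, α ≠ β → 5 ≤ (kneser Ω k).dist α β) {α γ : KVert Ω k}
    (hα : α ∈ C) (hαγ : (kneser Ω k).dist α γ = 2) : γ ∈ nbrs C 2 := by
  refine ⟨⟨α, hα, hαγ⟩, fun β hβ => ?_⟩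
  by_contra! hβγ
  rw [← eq_of_dist_eq_two_of_dist_le_two hC hα hβ hαγ hβγ.le, hαγ] at hβγ
  exact lt_irrefl _ hβγ

end Kneser

theorem stmt0_general {Ω : Type*} [Fintype Ω] [DecidableEq Ω] {n k : ℕ}
    (hcard : Fintype.card Ω = n) (hn : 2 * k + 2 ≤ n)
    (C : Set (KVert Ω k)) (hC : C.Nontrivial)
    (hdelta : ∀ α ∈ C, ∀ β ∈ C, α ≠ β → 5 ≤ (kneser Ω k).dist α β)
    (h2 : transOn (autC C) (nbrs C 2)) : False := by
  subst hcard
  obtain ⟨α, hα, α', hα', hne⟩ := hC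
  by_cases hk : k ≤ 2
  · have hdiam := Kneser.dist_le_two (by omega) hne
    have h5 := hdelta α hα α' hα' hne
    omega
  obtain ⟨β, hαβ, hβ⟩ :=
    Kneser.exists_dist_eq_two_card_inter α (m := 1) le_rfl (by omega) (by omega)
  obtain ⟨γ, hαγ, hγ⟩ :=
    Kneser.exists_dist_eq_two_card_inter α (m := 2) (by omega) (by omega) hn
  obtain ⟨g, hg, rfl⟩ := h2 β (Kneser.mem_nbrs_two_of_dist_eq_two hdelta hα hαβ)
    γ (Kneser.mem_nbrs_two_of_dist_eq_two hdelta hα hαγ)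
  have hfix : permV g α = α :=
    eq_of_dist_eq_two_of_dist_le_two hdelta (Kneser.permV_mem_of_mem_autC hg hα) hα
      (by rw [Kneser.dist_permV, hαβ]) hαγ.le
  have hinter := Kneser.card_inter_permV g α β
  rw [hfix] at hinter
  omega

/-- no 2-neighbour-transitive code with minimum distance at least 5 exists
in a Kneser graph `K(n,k)` that is not an odd graph (i.e. with `n ≥ 2k+2`). -/
theorem stmt0 {Ω : Type*} [Fintype Ω] [DecidableEq Ω] {n k : ℕ}
    (hcard : Fintype.card Ω = n) (hk : 2 ≤ k) (hn : 2 * k + 2 ≤ n)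
    (C : Set (KVert Ω k)) (hC : C.Nontrivial)
    (hdelta : ∀ α ∈ C, ∀ β ∈ C, α ≠ β → 5 ≤ (kneser Ω k).dist α β)
    (h0 : transOn (autC C) C)
    (h1 : transOn (autC C) (nbrs C 1))
    (h2 : transOn (autC C) (nbrs C 2)) : False :=
  stmt0_general hcard hn C hC hdelta h2
end

section
/- Let C be a 2-neighbour-transitive code in the odd graph O_{k+1} = K(2k+1,k) with minimum distance δ ≥ 5 (in the odd-graph metric). Then, viewing C as a code in the Johnson graph J(2k+1,k) on the same vertex set, C has minimum distance at least 3 in J(2k+1,k), and the set C₂ of 2-neighbours of C in the odd graph equals the set C′₁ of 1-neighbours of C in the Johnson graph; consequently C is neighbour-transitive in J(2k+1,k). -/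
/-!
Two `k`-subsets of a `(2k+1)`-set meeting in `k - 1` points have a common neighbour in the odd
graph, namely the complement of their union; conversely, vertices at odd-graph distance 2 meet in
`k - 1` points. Hence Johnson edges are exactly odd-graph 2-paths (for `k ≥ 2`) and
`d_O ≤ 2 d_J`. This turns `δ ≥ 5` into Johnson minimum distance at least 3, and together with
the triangle inequality in the odd graph it identifies `C₂` with the Johnson `C₁`, so that
transitivity on `C₂` is transitivity on `C₁`.
-/

open Finset

/-- The Johnson graph `J(n,k)` on the `k`-subsets of `Ω`. -/
def johnson (Ω : Type*) [DecidableEq Ω] (k : ℕ) : SimpleGraph (KVert Ω k) where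
  Adj a b := a ≠ b ∧ (a.1 ∩ b.1).card = k - 1
  symm := ⟨fun a b h => ⟨h.1.symm, by rw [Finset.inter_comm]; exact h.2⟩⟩
  loopless := ⟨fun a h => h.1 rfl⟩

/-- `Cᵢ` with respect to the Johnson metric. -/
def nbrsJ {Ω : Type*} [Fintype Ω] [DecidableEq Ω] {k : ℕ} (C : Set (KVert Ω k)) (i : ℕ) :
    Set (KVert Ω k) :=
  {γ | (∃ α ∈ C, (johnson Ω k).dist α γ = i) ∧ ∀ β ∈ C, i ≤ (johnson Ω k).dist β γ}

namespace SimpleGraph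

variable {V : Type*} {G H : SimpleGraph V}

theorem dist_le_two_mul_length_of_adj_imp_commonNeighbors
    (hGH : ∀ u v, G.Adj u v → (H.commonNeighbors u v).Nonempty) {u v : V} (p : G.Walk u v) :
    H.dist u v ≤ 2 * p.length := by
  induction p with
  | nil => simp
  | @cons u x v hux p ih =>
    obtain ⟨w, huw, hxw⟩ := hGH u x hux
    let q : H.Walk u x := .cons huw (.cons hxw.symm .nil)
    calc H.dist u v ≤ H.dist u x + H.dist x v := q.reachable.dist_triangle_left v
      _ ≤ 2 + 2 * p.length := Nat.add_le_add (dist_le q) ih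
      _ = 2 * (Walk.cons hux p).length := by simp only [Walk.length_cons]; ring

theorem Reachable.dist_le_two_mul_dist_of_adj_imp_commonNeighbors
    (hGH : ∀ u v, G.Adj u v → (H.commonNeighbors u v).Nonempty) {u v : V}
    (h : G.Reachable u v) :
    H.dist u v ≤ 2 * G.dist u v := by
  obtain ⟨p, hp⟩ := h.exists_walk_length_eq_dist
  exact hp ▸ dist_le_two_mul_length_of_adj_imp_commonNeighbors hGH p

end SimpleGraph

section OddGraph

variable {Ω : Type*} [DecidableEq Ω] {k : ℕ}

theorem KVert.eq_of_card_inter_eq {α β : KVert Ω k} (h : (α.1 ∩ β.1).card = k) :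
    α = β := by
  have hα : α.1 ∩ β.1 = α.1 := eq_of_subset_of_card_le inter_subset_left (by rw [h, α.2])
  have hβ : α.1 ∩ β.1 = β.1 := eq_of_subset_of_card_le inter_subset_right (by rw [h, β.2])
  exact Subtype.ext (hα.symm.trans hβ)

theorem KVert.pos_of_ne {α β : KVert Ω k} (h : α ≠ β) : 0 < k :=
  Nat.pos_of_ne_zero fun hk => h <| KVert.eq_of_card_inter_eq <| by
    have := card_le_card (inter_subset_left (s₁ := α.1) (s₂ := β.1))
    rw [α.2] at this
    omega

theorem KVert.ne_of_disjoint (hk : 0 < k) {α β : KVert Ω k} (h : Disjoint α.1 β.1) :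
    α ≠ β := by
  rintro rfl
  have := α.2
  rw [(disjoint_self_iff_empty _).mp h, card_empty] at this
  omega

theorem johnson_reachable (α β : KVert Ω k) : (johnson Ω k).Reachable α β := by
  induction h : (α.1 \ β.1).card generalizing α with
  | zero =>
    have hsub : α.1 ⊆ β.1 := by rwa [card_eq_zero, sdiff_eq_empty_iff_subset] at h
    rw [Subtype.ext (eq_of_subset_of_card_le hsub (by rw [α.2, β.2]))]
  | succ n ih =>
    obtain ⟨a, ha⟩ : (α.1 \ β.1).Nonempty := by rw [← card_pos, h]; omega
    obtain ⟨b, hb⟩ : (β.1 \ α.1).Nonempty := by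
      rw [← card_pos, ← card_sdiff_comm (by rw [α.2, β.2]), h]; omega
    rw [mem_sdiff] at ha hb
    have hbα : b ∉ α.1.erase a := fun hb' => hb.2 (mem_of_mem_erase hb')
    let μ : KVert Ω k := ⟨insert b (α.1.erase a), by
      rw [card_insert_of_notMem hbα, card_erase_of_mem ha.1, α.2]
      exact Nat.sub_add_cancel (pos_of_ne_zero (α.2 ▸ card_ne_zero_of_mem ha.1))⟩
    have hadj : (johnson Ω k).Adj α μ := by
      refine ⟨fun hαμ => hb.2 (hαμ ▸ mem_insert_self b _), ?_⟩
      rw [inter_insert_of_notMem hb.2, inter_eq_right.mpr (erase_subset a _),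
        card_erase_of_mem ha.1, α.2]
    have hμ : (μ.1 \ β.1).card = n := by
      simp only [μ]
      rw [insert_sdiff_of_mem _ hb.1, erase_sdiff_comm, card_erase_of_mem (mem_sdiff.mpr ha), h,
        Nat.add_sub_cancel]
    exact hadj.reachable.trans (ih μ hμ)

variable [Fintype Ω]

theorem kneser_commonNeighbors_nonempty_of_johnson_adj (hcard : Fintype.card Ω = 2 * k + 1)
    {α γ : KVert Ω k} (h : (johnson Ω k).Adj α γ) :
    ((kneser Ω k).commonNeighbors α γ).Nonempty := by
  have hk := KVert.pos_of_ne h.1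
  have hunion : (α.1 ∪ γ.1).card = k + 1 := by
    have := card_union_add_card_inter α.1 γ.1
    rw [α.2, γ.2, h.2] at this
    omega
  let δ : KVert Ω k := ⟨(α.1 ∪ γ.1)ᶜ, by rw [card_compl, hunion, hcard]; omega⟩
  have hαδ : Disjoint α.1 δ.1 := disjoint_compl_right.mono_left subset_union_left
  have hγδ : Disjoint γ.1 δ.1 := disjoint_compl_right.mono_left subset_union_right
  exact ⟨δ, ⟨KVert.ne_of_disjoint hk hαδ, hαδ⟩,
    ⟨KVert.ne_of_disjoint hk hγδ, hγδ⟩⟩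

theorem kneser_dist_le_two_mul_johnson_dist (hcard : Fintype.card Ω = 2 * k + 1)
    (α β : KVert Ω k) : (kneser Ω k).dist α β ≤ 2 * (johnson Ω k).dist α β :=
  (johnson_reachable α β).dist_le_two_mul_dist_of_adj_imp_commonNeighbors
    (fun _ _ => kneser_commonNeighbors_nonempty_of_johnson_adj hcard)

theorem johnson_adj_of_kneser_dist_eq_two (hcard : Fintype.card Ω = 2 * k + 1)
    {α γ : KVert Ω k} (h : (kneser Ω k).dist α γ = 2) : (johnson Ω k).Adj α γ := by
  have hedist : (kneser Ω k).edist α γ = 2 := by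
    rw [← (SimpleGraph.Reachable.of_dist_ne_zero (h ▸ two_ne_zero)).coe_dist_eq_edist, h]
    rfl
  obtain ⟨hne, -, δ, hδ⟩ := SimpleGraph.edist_eq_two_iff.mp hedist
  obtain ⟨⟨-, hαδ⟩, ⟨-, hγδ⟩⟩ := hδ
  have hunion : (α.1 ∪ γ.1).card ≤ k + 1 := by
    calc (α.1 ∪ γ.1).card ≤ (δ.1ᶜ).card := card_le_card (union_subset
          (subset_compl_iff_disjoint_right.mpr hαδ) (subset_compl_iff_disjoint_right.mpr hγδ))
      _ = k + 1 := by rw [card_compl, δ.2, hcard]; omega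
  have hinter : (α.1 ∩ γ.1).card ≤ k := (card_le_card inter_subset_left).trans_eq α.2
  have hinter_ne : (α.1 ∩ γ.1).card ≠ k := fun h' => hne (KVert.eq_of_card_inter_eq h')
  have := card_union_add_card_inter α.1 γ.1
  rw [α.2, γ.2] at this
  exact ⟨hne, by omega⟩

theorem kneser_dist_eq_two_of_johnson_adj (hk : 2 ≤ k) (hcard : Fintype.card Ω = 2 * k + 1)
    {α γ : KVert Ω k} (h : (johnson Ω k).Adj α γ) : (kneser Ω k).dist α γ = 2 := by
  obtain ⟨δ, hαδ, hγδ⟩ := kneser_commonNeighbors_nonempty_of_johnson_adj hcard h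
  let p : (kneser Ω k).Walk α γ := .cons hαδ (.cons hγδ.symm .nil)
  have hnadj : ¬(kneser Ω k).Adj α γ := fun hadj => by
    have := h.2
    rw [disjoint_iff_inter_eq_empty.mp hadj.2, card_empty] at this
    omega
  have := p.reachable.one_lt_dist_of_ne_of_not_adj h.1 hnadj
  have : (kneser Ω k).dist α γ ≤ 2 := SimpleGraph.dist_le p
  omega

theorem johnson_adj_iff_kneser_dist_eq_two (hk : 2 ≤ k) (hcard : Fintype.card Ω = 2 * k + 1)
    {α γ : KVert Ω k} : (johnson Ω k).Adj α γ ↔ (kneser Ω k).dist α γ = 2 :=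
  ⟨kneser_dist_eq_two_of_johnson_adj hk hcard, johnson_adj_of_kneser_dist_eq_two hcard⟩

theorem nbrs_two_eq_nbrsJ_one (hk : 2 ≤ k) (hcard : Fintype.card Ω = 2 * k + 1)
    {C : Set (KVert Ω k)}
    (hC : ∀ α ∈ C, ∀ β ∈ C, α ≠ β → 4 ≤ (kneser Ω k).dist α β) :
    nbrs C 2 = nbrsJ C 1 := by
  ext γ
  simp only [nbrs, nbrsJ, Set.mem_ofPred_eq, SimpleGraph.dist_eq_one_iff_adj,
    johnson_adj_iff_kneser_dist_eq_two hk hcard]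
  refine and_congr_right fun ⟨α, hα, hαγ⟩ =>
    forall₂_congr fun β hβ => ⟨fun h => ?_, fun _ => ?_⟩
  · have := kneser_dist_le_two_mul_johnson_dist hcard β γ
    omega
  · rcases eq_or_ne β α with rfl | hβα
    · exact hαγ.ge
    have hγα : (kneser Ω k).Reachable γ α :=
      (SimpleGraph.Reachable.of_dist_ne_zero (by omega)).symm
    have := hγα.dist_triangle_right β
    rw [SimpleGraph.dist_comm (u := γ), hαγ] at this
    have := hC β hβ α hα hβα
    omega

end OddGraph

theorem stmt2_general {Ω : Type*} [Fintype Ω] [DecidableEq Ω] {k : ℕ}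
    (hk : 2 ≤ k) (hcard : Fintype.card Ω = 2 * k + 1)
    (C : Set (KVert Ω k))
    (hdelta : ∀ α ∈ C, ∀ β ∈ C, α ≠ β → 5 ≤ (kneser Ω k).dist α β)
    (h2 : transOn (autC C) (nbrs C 2)) :
    (∀ α ∈ C, ∀ β ∈ C, α ≠ β → 3 ≤ (johnson Ω k).dist α β) ∧
    nbrs C 2 = nbrsJ C 1 ∧
    transOn (autC C) (nbrsJ C 1) := by
  have hC₂ : nbrs C 2 = nbrsJ C 1 :=
    nbrs_two_eq_nbrsJ_one hk hcard fun α hα β hβ hne =>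
      (hdelta α hα β hβ hne).trans' (by norm_num)
  refine ⟨fun α hα β hβ hne => ?_, hC₂, hC₂ ▸ h2⟩
  have := kneser_dist_le_two_mul_johnson_dist hcard α β
  have := hdelta α hα β hβ hne
  omega

/-- a 2-neighbour-transitive code in the odd graph with odd-graph minimum
distance at least 5 is a neighbour-transitive code of minimum distance at least 3 in the
Johnson graph on the same vertex set, with `C₂` (odd graph) equal to `C₁` (Johnson). -/
theorem stmt2 {Ω : Type*} [Fintype Ω] [DecidableEq Ω] {k : ℕ}
    (hk : 2 ≤ k) (hcard : Fintype.card Ω = 2 * k + 1)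
    (C : Set (KVert Ω k)) (hC : C.Nontrivial)
    (hdelta : ∀ α ∈ C, ∀ β ∈ C, α ≠ β → 5 ≤ (kneser Ω k).dist α β)
    (h0 : transOn (autC C) C)
    (h1 : transOn (autC C) (nbrs C 1))
    (h2 : transOn (autC C) (nbrs C 2)) :
    (∀ α ∈ C, ∀ β ∈ C, α ≠ β → 3 ≤ (johnson Ω k).dist α β) ∧
    nbrs C 2 = nbrsJ C 1 ∧
    transOn (autC C) (nbrsJ C 1) :=
  stmt2_general hk hcard C hdelta h2
end

section
/- Let Ω be the disjoint union of nonempty sets U and V with |U| = u, |V| = v, let a + b = k with 0 ≤ a ≤ u, 0 ≤ b ≤ v, and let C = C_int(u,v;a,b) be the set of all k-subsets α of Ω with |α ∩ U| = a and |α ∩ V| = b. Suppose n = u + v, 2 ≤ k ≤ (n−1)/2, and one of: (1) u = 1 and a = 0; (2) n = 2k+1, u = 2a, v = 2b+1; (3) u = a. Then G = Sym(U) × Sym(V) ≤ Aut(C) and G acts transitively on C and on C₁ (the set of 1-neighbours of C in the Kneser graph K(n,k)); i.e. C is G-neighbour-transitive. -/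
open Finset

/-!
The G-orbits on k-sets are exactly the classes of sets with a given `|α ∩ U|`: a permutation
preserving `U` preserves this number, and two k-sets with the same number are related by
permuting `U` and `V` separately. Hence `G` preserves `C` and is transitive on it, and it is
transitive on `C₁` as soon as all of `C₁` meets `U` equally. A vertex `γ ∈ C₁` is not in `C`
but is disjoint from a codeword, so `|γ ∩ U| ≠ a`, `a + |γ ∩ U| ≤ u` and
`(k - a) + (k - |γ ∩ U|) ≤ v`; in the three cases these force `|γ ∩ U|` to be `1`, `a - 1`
and `0` respectively.
-/

open Equiv

lemma val_mem_of_map_subtype_eq {Ω : Type*} {p : Ω → Prop} [DecidablePred p] {s t : Finset Ω}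
    {σ : Perm (Subtype p)} (hσ : (s.subtype p).map σ.toEmbedding = t.subtype p)
    {x : Ω} (hxs : x ∈ s) (hx : p x) : (σ ⟨x, hx⟩ : Ω) ∈ t :=
  mem_subtype.1 (hσ ▸ mem_map_of_mem _ (mem_subtype.2 hxs))

section

variable {Ω : Type*} [DecidableEq Ω]

lemma card_map_inter_eq_of_forall_mem_iff {g : Perm Ω} {U : Finset Ω}
    (hg : ∀ x, x ∈ U ↔ g x ∈ U) (s : Finset Ω) :
    (s.map g.toEmbedding ∩ U).card = (s ∩ U).card := by
  rw [← filter_mem_eq_inter, ← filter_mem_eq_inter, filter_map, card_map]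
  exact congrArg card (filter_congr fun x _ => (hg x).symm)

lemma exists_perm_forall_mem_iff_map_eq (U : Finset Ω) {s t : Finset Ω}
    (hU : (s ∩ U).card = (t ∩ U).card) (hst : s.card = t.card) :
    ∃ g : Perm Ω, (∀ x, x ∈ U ↔ g x ∈ U) ∧ s.map g.toEmbedding = t := by
  rw [← filter_mem_eq_inter, ← filter_mem_eq_inter] at hU
  have hin : (s.subtype (· ∈ U)).card = (t.subtype (· ∈ U)).card := by
    simpa only [card_subtype] using hU
  have hout : (s.subtype (· ∉ U)).card = (t.subtype (· ∉ U)).card := by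
    have hs := card_filter_add_card_filter_not (s := s) (· ∈ U)
    have ht := card_filter_add_card_filter_not (s := t) (· ∈ U)
    simp only [card_subtype]
    omega
  obtain ⟨σ, hσ⟩ := Perm.exists_map_finset_eq _ _ hin
  obtain ⟨τ, hτ⟩ := Perm.exists_map_finset_eq _ _ hout
  refine ⟨σ.subtypeCongr τ, fun x => ?_, eq_of_subset_of_card_le ?_ (by simp [hst])⟩
  · by_cases hx : x ∈ U
    · simp [Perm.subtypeCongr.left_apply _ _ hx, hx]
    · simpa [Perm.subtypeCongr.right_apply _ _ hx, hx] using (τ ⟨x, hx⟩).2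
  · intro y hy
    obtain ⟨x, hxs, rfl⟩ := mem_map.1 hy
    by_cases hx : x ∈ U
    · simpa [Perm.subtypeCongr.left_apply _ _ hx] using val_mem_of_map_subtype_eq hσ hxs hx
    · simpa [Perm.subtypeCongr.right_apply _ _ hx] using val_mem_of_map_subtype_eq hτ hxs hx

variable {k : ℕ}

lemma image_permV_setOf_card_inter_eq {g : Perm Ω} {U : Finset Ω}
    (hg : ∀ x, x ∈ U ↔ g x ∈ U) (c : ℕ) :
    permV g '' {α : KVert Ω k | (α.1 ∩ U).card = c} = {α | (α.1 ∩ U).card = c} := by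
  have hg' : ∀ x, x ∈ U ↔ g.symm x ∈ U := fun x => by simpa using (hg (g.symm x)).symm
  rw [Set.image_eq_preimage_of_inverse (f := permV g) (g := permV g.symm)
    (fun α => Subtype.ext (by simp [permV, map_map]))
    (fun α => Subtype.ext (by simp [permV, map_map]))]
  ext α
  simp [permV, card_map_inter_eq_of_forall_mem_iff hg']

lemma transOn_of_card_inter_eq (U : Finset Ω) {S : Set (KVert Ω k)}
    (hS : ∀ x ∈ S, ∀ y ∈ S, (x.1 ∩ U).card = (y.1 ∩ U).card) :
    transOn {g : Perm Ω | ∀ x, x ∈ U ↔ g x ∈ U} S := by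
  intro x hx y hy
  obtain ⟨g, hg, hxy⟩ := exists_perm_forall_mem_iff_map_eq U (hS x hx y hy) (x.2.trans y.2.symm)
  exact ⟨g, hg, Subtype.ext hxy⟩

lemma card_inter_add_card_inter_le_of_disjoint {s t : Finset Ω} (hst : Disjoint s t)
    (W : Finset Ω) : (s ∩ W).card + (t ∩ W).card ≤ W.card := by
  rw [← card_union_of_disjoint (hst.mono inter_subset_left inter_subset_left)]
  exact card_le_card (union_subset inter_subset_right inter_subset_right)

variable [Fintype Ω]

lemma card_inter_add_card_inter_compl (s U : Finset Ω) :
    (s ∩ U).card + (s ∩ Uᶜ).card = s.card := by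
  rw [← card_union_of_disjoint (disjoint_compl_right.mono inter_subset_right
    inter_subset_right), ← inter_union_distrib_left, union_compl, inter_univ]

lemma exists_disjoint_of_mem_nbrs_one {C : Set (KVert Ω k)} {γ : KVert Ω k}
    (hγ : γ ∈ nbrs C 1) : γ ∉ C ∧ ∃ α ∈ C, Disjoint α.1 γ.1 := by
  obtain ⟨⟨α, hα, hdist⟩, hfar⟩ := hγ
  exact ⟨fun hγC => by simpa using hfar γ hγC, α, hα,
    (SimpleGraph.dist_eq_one_iff_adj.1 hdist).2⟩

lemma card_inter_of_mem_nbrs_one {U : Finset Ω} {a : ℕ} {γ : KVert Ω k}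
    (hγ : γ ∈ nbrs {α : KVert Ω k | (α.1 ∩ U).card = a} 1) :
    (γ.1 ∩ U).card ≠ a ∧ a + (γ.1 ∩ U).card ≤ U.card ∧
      2 * k ≤ a + (γ.1 ∩ U).card + Uᶜ.card := by
  obtain ⟨hγC, α, hα, hdisj⟩ := exists_disjoint_of_mem_nbrs_one hγ
  have hαU : (α.1 ∩ U).card = a := hα
  have hU := card_inter_add_card_inter_le_of_disjoint hdisj U
  have hUc := card_inter_add_card_inter_le_of_disjoint hdisj Uᶜ
  have hα_split := card_inter_add_card_inter_compl α.1 U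
  have hγ_split := card_inter_add_card_inter_compl γ.1 U
  have hαk := α.2
  have hγk := γ.2
  exact ⟨hγC, by omega, by omega⟩

end

theorem stmt4_general {Ω : Type*} [Fintype Ω] [DecidableEq Ω] {n k u v a b : ℕ}
    (U V : Finset Ω) (hUV : Disjoint U V) (hunion : U ∪ V = Finset.univ)
    (hu : U.card = u) (hv : V.card = v)
    (hab : a + b = k)
    (hcases : (u = 1 ∧ a = 0) ∨ (n = 2 * k + 1 ∧ u = 2 * a ∧ v = 2 * b + 1) ∨ u = a)
    (C : Set (KVert Ω k))
    (hCdef : C = {α | (α.1 ∩ U).card = a ∧ (α.1 ∩ V).card = b})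
    (G : Set (Equiv.Perm Ω)) (hGdef : G = {g | ∀ x : Ω, x ∈ U ↔ g x ∈ U}) :
    G ⊆ autC C ∧ transOn G C ∧ transOn G (nbrs C 1) := by
  obtain rfl : V = Uᶜ := (IsCompl.compl_eq ⟨hUV, codisjoint_iff.2 hunion⟩).symm
  have hC : C = {α | (α.1 ∩ U).card = a} := by
    subst hCdef
    ext α
    have hsplit := card_inter_add_card_inter_compl α.1 U
    have hαk := α.2
    change _ ∧ _ ↔ (α.1 ∩ U).card = a
    omega
  subst hC hGdef
  refine ⟨fun g hg => image_permV_setOf_card_inter_eq hg a,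
    transOn_of_card_inter_eq U fun x hx y hy => hx.trans hy.symm,
    transOn_of_card_inter_eq U fun x hx y hy => ?_⟩
  have hx := card_inter_of_mem_nbrs_one hx
  have hy := card_inter_of_mem_nbrs_one hy
  rcases hcases with ⟨rfl, rfl⟩ | ⟨-, rfl, rfl⟩ | rfl <;> omega

/-- the codes `C_int(u,v;a,b)` in the listed three cases are
`(Sym(U) × Sym(V))`-neighbour-transitive in `K(n,k)`. -/
theorem stmt4 {Ω : Type*} [Fintype Ω] [DecidableEq Ω] {n k u v a b : ℕ}
    (U V : Finset Ω) (hUV : Disjoint U V) (hunion : U ∪ V = Finset.univ)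
    (hUne : U.Nonempty) (hVne : V.Nonempty)
    (hu : U.card = u) (hv : V.card = v)
    (hab : a + b = k) (hau : a ≤ u) (hbv : b ≤ v)
    (hn : n = u + v) (hcard : Fintype.card Ω = n)
    (hk2 : 2 ≤ k) (hkn : 2 * k + 1 ≤ n)
    (hcases : (u = 1 ∧ a = 0) ∨ (n = 2 * k + 1 ∧ u = 2 * a ∧ v = 2 * b + 1) ∨ u = a)
    (C : Set (KVert Ω k))
    (hCdef : C = {α | (α.1 ∩ U).card = a ∧ (α.1 ∩ V).card = b})
    (G : Set (Equiv.Perm Ω)) (hGdef : G = {g | ∀ x : Ω, x ∈ U ↔ g x ∈ U}) :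
    G ⊆ autC C ∧ transOn G C ∧ transOn G (nbrs C 1) :=
  stmt4_general U V hUV hunion hu hv hab hcases C hCdef G hGdef
end

section
/- Let C be a neighbour-transitive code (|C| ≥ 2) in K(n,k) with 2 ≤ k ≤ (n−1)/2. Then the setwise stabiliser Aut(C) of C in Sym(Ω) has at most 2 orbits on Ω. Equivalently, there do not exist three pairwise disjoint nonempty sets W₁, W₂, W₃ covering Ω such that Aut(C) ≤ Sym(W₁) × Sym(W₂) × Sym(W₃). -/
/-!
Fix a codeword `α`. A set of points stable under `Aut(C)` meets all codewords in the same number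
of points, and likewise all vertices of `C₁`. Every `k`-subset of the complement of `α` is
adjacent to `α`, hence (the Kneser graph being connected) lies in `C` or in `C₁`.

If two disjoint nonempty stable sets lay inside `α`, every codeword would contain both, and the
transposition of a point of one with a point of the other would lie in `Aut(C)`. So at least two
of the three parts meet the complement of `α`. For a `(k+1)`-set `P` outside `α` and `x, y ∈ P`,
if `P ∖ {x}` and `P ∖ {y}` lie in the same orbit then `x` and `y` lie in the same stable sets.
If the third part lies inside `α`, all `k`-sets outside `α` lie in `C₁`; otherwise two of three
such sets lie in a common orbit. Either way two points of different parts are not separated by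
the parts.
-/

open Finset

section Kneser

variable {Ω : Type*} [Fintype Ω] [DecidableEq Ω] {k : ℕ}

lemma kneser_reachable_of_card_union_le (hk : 0 < k) {a b : KVert Ω k}
    (hab : k + #(a.1 ∪ b.1) ≤ Fintype.card Ω) : (kneser Ω k).Reachable a b := by
  obtain ⟨D, hD, hDk⟩ := exists_subset_card_eq (s := (a.1 ∪ b.1)ᶜ) (n := k)
    (by rw [card_compl]; omega)
  have hadj : ∀ c : KVert Ω k, c.1 ⊆ a.1 ∪ b.1 → (kneser Ω k).Adj c ⟨D, hDk⟩ := by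
    intro c hc
    have hcD : Disjoint c.1 D :=
      disjoint_of_subset_left hc (subset_compl_iff_disjoint_left.mp hD)
    refine ⟨fun h => ?_, hcD⟩
    have hc0 : c.1 = ∅ := by rw [h] at hcD ⊢; exact disjoint_self.mp hcD
    have := c.2
    rw [hc0, card_empty] at this
    omega
  exact (hadj a subset_union_left).reachable.trans (hadj b subset_union_right).reachable.symm

lemma kneser_preconnected (hk : 0 < k) (hn : 2 * k + 1 ≤ Fintype.card Ω) :
    (kneser Ω k).Preconnected := by
  have heq : ∀ a b : KVert Ω k, a.1 ⊆ b.1 → a = b := fun a b h =>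
    Subtype.ext (eq_of_subset_of_card_le h (by rw [a.2, b.2]))
  intro a b
  induction hm : #(a.1 \ b.1) using Nat.strong_induction_on generalizing a with
  | _ m ih =>
  by_cases hab : a = b
  · exact hab ▸ .refl a
  obtain ⟨x, hx⟩ := sdiff_nonempty.mpr fun h => hab (heq a b h)
  obtain ⟨y, hy⟩ := sdiff_nonempty.mpr fun h => hab (heq b a h).symm
  rw [mem_sdiff] at hx hy
  have hya : y ∉ a.1.erase x := fun h => hy.2 (mem_of_mem_erase h)
  let a' : KVert Ω k :=
    ⟨insert y (a.1.erase x), by rw [card_insert_of_notMem hya, card_erase_of_mem hx.1, a.2]; omega⟩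
  have hunion : a.1 ∪ a'.1 = insert y a.1 := by
    ext z
    simp only [a', mem_union, mem_insert, mem_erase]
    tauto
  have hstep : (kneser Ω k).Reachable a a' := kneser_reachable_of_card_union_le hk (by
    rw [hunion, card_insert_of_notMem hy.2, a.2]; omega)
  have hdiff : a'.1 \ b.1 = (a.1 \ b.1).erase x := by
    ext z
    simp only [a', mem_sdiff, mem_insert, mem_erase]
    constructor
    · rintro ⟨rfl | h, hzb⟩
      · exact absurd hy.1 hzb
      · exact ⟨h.1, h.2, hzb⟩
    · rintro ⟨hzx, hza, hzb⟩
      exact ⟨Or.inr ⟨hzx, hza⟩, hzb⟩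
  have hlt : #(a'.1 \ b.1) < m := by
    rw [hdiff, ← hm]
    exact card_erase_lt_of_mem (mem_sdiff.mpr hx)
  exact hstep.trans (ih _ hlt a' rfl)

lemma mem_nbrs_one_of_disjoint (hconn : (kneser Ω k).Preconnected) {C : Set (KVert Ω k)}
    {α S : KVert Ω k} (hα : α ∈ C) (hS : S ∉ C) (hαS : Disjoint α.1 S.1) : S ∈ nbrs C 1 :=
  ⟨⟨α, hα, SimpleGraph.dist_eq_one_iff_adj.mpr ⟨ne_of_mem_of_not_mem hα hS, hαS⟩⟩,
    fun β hβ => (hconn β S).pos_dist_of_ne (ne_of_mem_of_not_mem hβ hS)⟩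

end Kneser

section Stable

variable {Ω : Type*}

def IsStableBy (G : Set (Equiv.Perm Ω)) (V : Finset Ω) : Prop :=
  ∀ g ∈ G, ∀ z, z ∈ V ↔ g z ∈ V

def SameStableSets (G : Set (Equiv.Perm Ω)) (x y : Ω) : Prop :=
  ∀ V, IsStableBy G V → (x ∈ V ↔ y ∈ V)

lemma not_sameStableSets_of_disjoint {G : Set (Equiv.Perm Ω)} {V W : Finset Ω}
    (hVW : Disjoint V W) (hV : IsStableBy G V) {x y : Ω} (hx : x ∈ V) (hy : y ∈ W) :
    ¬SameStableSets G x y :=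
  fun h => disjoint_left.mp hVW ((h V hV).mp hx) hy

variable [DecidableEq Ω] {k : ℕ}

lemma card_inter_eq_of_transOn {G : Set (Equiv.Perm Ω)} {T : Set (KVert Ω k)} {V : Finset Ω}
    (hT : transOn G T) (hV : IsStableBy G V) {S S' : KVert Ω k} (hS : S ∈ T) (hS' : S' ∈ T) :
    #(S.1 ∩ V) = #(S'.1 ∩ V) := by
  obtain ⟨g, hg, rfl⟩ := hT S hS S' hS'
  have : (S.1 ∩ V).map g.toEmbedding = (permV g S).1 ∩ V := by
    ext z
    simp only [permV, mem_map_equiv, mem_inter, hV g hg (g.symm z), Equiv.apply_symm_apply]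
  rw [← this, card_map]

lemma sameStableSets_of_erase_mem {G : Set (Equiv.Perm Ω)} {T : Set (KVert Ω k)}
    (hT : transOn G T) {P : Finset Ω} {x y : Ω} (hx : x ∈ P) (hy : y ∈ P) {S S' : KVert Ω k}
    (hS : S.1 = P.erase x) (hS' : S'.1 = P.erase y) (hST : S ∈ T) (hS'T : S' ∈ T) :
    SameStableSets G x y := by
  intro V hV
  have h := card_inter_eq_of_transOn hT hV hST hS'T
  rw [hS, hS', erase_inter, erase_inter, card_erase_eq_ite, card_erase_eq_ite] at h
  have hpos : x ∈ V ∨ y ∈ V → 0 < #(P ∩ V) := by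
    rintro (h | h) <;> exact card_pos.mpr ⟨_, mem_inter.mpr ⟨‹_›, h⟩⟩
  simp only [mem_inter, hx, hy, true_and] at h
  by_cases hxV : x ∈ V <;> by_cases hyV : y ∈ V <;> simp only [hxV, hyV, if_true, if_false] at h
  · tauto
  · have := hpos (.inl hxV); omega
  · have := hpos (.inr hyV); omega
  · tauto

lemma map_swap_eq_self {x y : Ω} {s : Finset Ω} (hx : x ∈ s) (hy : y ∈ s) :
    s.map (Equiv.swap x y).toEmbedding = s := by
  ext z
  rw [mem_map_equiv, Equiv.symm_swap, Equiv.swap_apply_def]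
  split_ifs with h₁ h₂ <;> subst_vars <;> simp [hx, hy]

lemma swap_mem_autC {C : Set (KVert Ω k)} {x y : Ω} (h : ∀ β ∈ C, x ∈ β.1 ∧ y ∈ β.1) :
    Equiv.swap x y ∈ autC C :=
  Set.EqOn.image_eq_self fun β hβ => Subtype.ext (map_swap_eq_self (h β hβ).1 (h β hβ).2)

end Stable

section Code

variable {Ω : Type*} [DecidableEq Ω] {k : ℕ} {C : Set (KVert Ω k)} {α : KVert Ω k}

lemma subset_of_isStableBy_of_subset (h0 : transOn (autC C) C) (hα : α ∈ C) {V : Finset Ω}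
    (hV : IsStableBy (autC C) V) (hVα : V ⊆ α.1) {β : KVert Ω k} (hβ : β ∈ C) : V ⊆ β.1 := by
  have h := card_inter_eq_of_transOn h0 hV hβ hα
  rw [inter_eq_right.mpr hVα] at h
  exact inter_eq_right.mp (eq_of_subset_of_card_le inter_subset_right h.ge)

lemma not_disjoint_of_isStableBy_of_subset (h0 : transOn (autC C) C) (hα : α ∈ C)
    {V W : Finset Ω} (hV : IsStableBy (autC C) V) (hW : IsStableBy (autC C) W)
    (hVne : V.Nonempty) (hWne : W.Nonempty) (hVα : V ⊆ α.1) (hWα : W ⊆ α.1) :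
    ¬Disjoint V W := by
  obtain ⟨x, hx⟩ := hVne
  obtain ⟨y, hy⟩ := hWne
  have hswap : Equiv.swap x y ∈ autC C := swap_mem_autC fun β hβ =>
    ⟨subset_of_isStableBy_of_subset h0 hα hV hVα hβ hx,
      subset_of_isStableBy_of_subset h0 hα hW hWα hβ hy⟩
  have hyV : y ∈ V := by simpa using (hV _ hswap x).mp hx
  exact fun hVW => disjoint_left.mp hVW hyV hy

variable [Fintype Ω]

lemma exists_superset_card_eq_of_disjoint (hn : 2 * k + 1 ≤ Fintype.card Ω) (α : KVert Ω k)
    {Q : Finset Ω} (hQ : Disjoint α.1 Q) (hQk : #Q ≤ k + 1) :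
    ∃ P, Q ⊆ P ∧ Disjoint α.1 P ∧ #P = k + 1 := by
  obtain ⟨P, hQP, hP, hPk⟩ := exists_subsuperset_card_eq
    (subset_compl_iff_disjoint_left.mpr hQ) hQk (by rw [card_compl, α.2]; omega)
  exact ⟨P, hQP, subset_compl_iff_disjoint_left.mp hP, hPk⟩

lemma exists_erase_mem_or_mem_nbrs_one (hconn : (kneser Ω k).Preconnected) (hα : α ∈ C)
    {P : Finset Ω} (hP : #P = k + 1) (hPα : Disjoint α.1 P) {x : Ω} (hx : x ∈ P) :
    ∃ S : KVert Ω k, S.1 = P.erase x ∧ (S ∈ C ∨ S ∈ nbrs C 1) :=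
  ⟨⟨P.erase x, by rw [card_erase_of_mem hx, hP]; rfl⟩, rfl, or_iff_not_imp_left.mpr fun hS =>
    mem_nbrs_one_of_disjoint hconn hα hS (disjoint_of_subset_right (erase_subset x P) hPα)⟩

/-- Once some nonempty stable set lies inside a codeword, no `k`-set outside that codeword is a
codeword, so all of them lie in the single orbit `C₁`. -/
lemma sameStableSets_of_isStableBy_subset (hk : 0 < k) (hn : 2 * k + 1 ≤ Fintype.card Ω)
    (h0 : transOn (autC C) C) (h1 : transOn (autC C) (nbrs C 1)) (hα : α ∈ C)
    {W : Finset Ω} (hW : IsStableBy (autC C) W) (hWne : W.Nonempty) (hWα : W ⊆ α.1)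
    {x y : Ω} (hx : x ∉ α.1) (hy : y ∉ α.1) : SameStableSets (autC C) x y := by
  obtain ⟨P, hxyP, hPα, hP⟩ := exists_superset_card_eq_of_disjoint hn α (Q := {x, y})
    (by simp [hx, hy]) ((card_le_two).trans (by omega))
  have hmem : ∀ {z}, z ∈ P → ∃ S : KVert Ω k, S.1 = P.erase z ∧ S ∈ nbrs C 1 := by
    intro z hz
    obtain ⟨S, hS, hSC | hSC⟩ := exists_erase_mem_or_mem_nbrs_one
      (kneser_preconnected hk hn) hα hP hPα hz
    · obtain ⟨w, hw⟩ := hWne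
      have hwS : w ∈ P.erase z := hS ▸ subset_of_isStableBy_of_subset h0 hα hW hWα hSC hw
      exact absurd (mem_of_mem_erase hwS) (disjoint_left.mp hPα (hWα hw))
    · exact ⟨S, hS, hSC⟩
  have hxP : x ∈ P := hxyP (by simp)
  have hyP : y ∈ P := hxyP (by simp)
  obtain ⟨S, hS, hSC⟩ := hmem hxP
  obtain ⟨S', hS', hS'C⟩ := hmem hyP
  exact sameStableSets_of_erase_mem h1 hxP hyP hS hS' hSC hS'C

lemma sameStableSets_of_three (hk : 2 ≤ k) (hn : 2 * k + 1 ≤ Fintype.card Ω)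
    (h0 : transOn (autC C) C) (h1 : transOn (autC C) (nbrs C 1)) (hα : α ∈ C)
    {x y z : Ω} (hx : x ∉ α.1) (hy : y ∉ α.1) (hz : z ∉ α.1) :
    SameStableSets (autC C) x y ∨ SameStableSets (autC C) x z ∨
      SameStableSets (autC C) y z := by
  obtain ⟨P, hxyzP, hPα, hP⟩ := exists_superset_card_eq_of_disjoint hn α (Q := {x, y, z})
    (by simp [hx, hy, hz]) ((card_le_three).trans (by omega))
  have hxP : x ∈ P := hxyzP (by simp)
  have hyP : y ∈ P := hxyzP (by simp)
  have hzP : z ∈ P := hxyzP (by simp)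
  have hconn := kneser_preconnected (by omega) hn
  obtain ⟨Sx, hSx, mx⟩ := exists_erase_mem_or_mem_nbrs_one hconn hα hP hPα hxP
  obtain ⟨Sy, hSy, my⟩ := exists_erase_mem_or_mem_nbrs_one hconn hα hP hPα hyP
  obtain ⟨Sz, hSz, mz⟩ := exists_erase_mem_or_mem_nbrs_one hconn hα hP hPα hzP
  rcases mx with mx | mx <;> rcases my with my | my
  · exact .inl (sameStableSets_of_erase_mem h0 hxP hyP hSx hSy mx my)
  · rcases mz with mz | mz
    · exact .inr (.inl (sameStableSets_of_erase_mem h0 hxP hzP hSx hSz mx mz))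
    · exact .inr (.inr (sameStableSets_of_erase_mem h1 hyP hzP hSy hSz my mz))
  · rcases mz with mz | mz
    · exact .inr (.inr (sameStableSets_of_erase_mem h0 hyP hzP hSy hSz my mz))
    · exact .inr (.inl (sameStableSets_of_erase_mem h1 hxP hzP hSx hSz mx mz))
  · exact .inl (sameStableSets_of_erase_mem h1 hxP hyP hSx hSy mx my)

end Code

theorem stmt7_general {Ω : Type*} [Fintype Ω] [DecidableEq Ω] {n k : ℕ}
    (hcard : Fintype.card Ω = n) (hk : 2 ≤ k) (hkn : 2 * k + 1 ≤ n)
    (C : Set (KVert Ω k)) (hC : C.Nontrivial)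
    (h0 : transOn (autC C) C) (h1 : transOn (autC C) (nbrs C 1))
    (W1 W2 W3 : Finset Ω)
    (hne1 : W1.Nonempty) (hne2 : W2.Nonempty) (hne3 : W3.Nonempty)
    (h12 : Disjoint W1 W2) (h13 : Disjoint W1 W3) (h23 : Disjoint W2 W3)
    (hpres : ∀ g ∈ autC C, ∀ x : Ω,
      (x ∈ W1 ↔ g x ∈ W1) ∧ (x ∈ W2 ↔ g x ∈ W2) ∧ (x ∈ W3 ↔ g x ∈ W3)) :
    False := by
  obtain ⟨α, hα, -⟩ := hC
  have hn : 2 * k + 1 ≤ Fintype.card Ω := hcard ▸ hkn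
  have hW1 : IsStableBy (autC C) W1 := fun g hg z => (hpres g hg z).1
  have hW2 : IsStableBy (autC C) W2 := fun g hg z => (hpres g hg z).2.1
  have hW3 : IsStableBy (autC C) W3 := fun g hg z => (hpres g hg z).2.2
  have outside {U V W} (hU : IsStableBy (autC C) U) (hUne : U.Nonempty) (hUα : U ⊆ α.1)
      (hV : IsStableBy (autC C) V) (hVW : Disjoint V W) (hVα : ¬V ⊆ α.1) (hWα : ¬W ⊆ α.1) :
      False := by
    obtain ⟨x, hx, hxα⟩ := not_subset.mp hVα
    obtain ⟨y, hy, hyα⟩ := not_subset.mp hWα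
    exact not_sameStableSets_of_disjoint hVW hV hx hy
      (sameStableSets_of_isStableBy_subset (by omega) hn h0 h1 hα hU hUne hUα hxα hyα)
  by_cases E1 : W1 ⊆ α.1 <;> by_cases E2 : W2 ⊆ α.1 <;> by_cases E3 : W3 ⊆ α.1
  · exact not_disjoint_of_isStableBy_of_subset h0 hα hW1 hW2 hne1 hne2 E1 E2 h12
  · exact not_disjoint_of_isStableBy_of_subset h0 hα hW1 hW2 hne1 hne2 E1 E2 h12
  · exact not_disjoint_of_isStableBy_of_subset h0 hα hW1 hW3 hne1 hne3 E1 E3 h13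
  · exact outside hW1 hne1 E1 hW2 h23 E2 E3
  · exact not_disjoint_of_isStableBy_of_subset h0 hα hW2 hW3 hne2 hne3 E2 E3 h23
  · exact outside hW2 hne2 E2 hW1 h13 E1 E3
  · exact outside hW3 hne3 E3 hW1 h12 E1 E2
  obtain ⟨x, hx, hxα⟩ := not_subset.mp E1
  obtain ⟨y, hy, hyα⟩ := not_subset.mp E2
  obtain ⟨z, hz, hzα⟩ := not_subset.mp E3
  rcases sameStableSets_of_three hk hn h0 h1 hα hxα hyα hzα with h | h | h
  · exact not_sameStableSets_of_disjoint h12 hW1 hx hy h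
  · exact not_sameStableSets_of_disjoint h13 hW1 hx hz h
  · exact not_sameStableSets_of_disjoint h23 hW2 hy hz h

/-- the automorphism group of a neighbour-transitive code in `K(n,k)` has
at most two orbits on `Ω`: it cannot preserve three pairwise disjoint nonempty sets
covering `Ω`. -/
theorem stmt7 {Ω : Type*} [Fintype Ω] [DecidableEq Ω] {n k : ℕ}
    (hcard : Fintype.card Ω = n) (hk : 2 ≤ k) (hkn : 2 * k + 1 ≤ n)
    (C : Set (KVert Ω k)) (hC : C.Nontrivial)
    (h0 : transOn (autC C) C) (h1 : transOn (autC C) (nbrs C 1))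
    (W1 W2 W3 : Finset Ω)
    (hne1 : W1.Nonempty) (hne2 : W2.Nonempty) (hne3 : W3.Nonempty)
    (h12 : Disjoint W1 W2) (h13 : Disjoint W1 W3) (h23 : Disjoint W2 W3)
    (hcover : W1 ∪ W2 ∪ W3 = Finset.univ)
    (hpres : ∀ g ∈ autC C, ∀ x : Ω,
      (x ∈ W1 ↔ g x ∈ W1) ∧ (x ∈ W2 ↔ g x ∈ W2) ∧ (x ∈ W3 ↔ g x ∈ W3)) :
    False :=
  stmt7_general hcard hk hkn C hC h0 h1 W1 W2 W3 hne1 hne2 hne3 h12 h13 h23 hpres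
end

section
/- Let C be a neighbour-transitive code (|C| ≥ 2) in the odd graph O_{k+1} = K(2k+1,k) with minimum distance δ = 1, and suppose Aut(C) preserves a partition of Ω into a blocks each of size b with ab = 2k+1, a,b ≥ 2, acting transitively on the blocks. Then for every α ∈ C the multiset of block intersection sizes {|α ∩ Bᵢ|} is either {(b−1)/2 with multiplicity (a+1)/2, (b+1)/2 with multiplicity (a−1)/2} or {0 with multiplicity (a−1)/2, (b−1)/2 with multiplicity 1, b with multiplicity (a−1)/2}. -/
open Finset

/-!
Let `α` be a codeword and `W` the block profile of its complement, so that every codeword has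
profile `b - W`. The neighbours of `α` are the sets `αᶜ \ {y}`, whose profiles arise from `W` by
lowering one positive entry by one. As `δ = 1`, lowering some entry `u` gives `b - W`; as
`Aut(C)` is transitive on `C₁`, all lowerings that do not give `b - W` give one common profile,
and lowering distinct values gives distinct multisets, so the positive entries of `W` take at most
two values. Comparing `W - {u} + {u - 1} = b - W` with its reflection under `x ↦ b - x` forces
`2u = b + 1` and makes `W - {u}` reflection-symmetric, which leaves only the two listed shapes.
-/

open Function

def decrAt (W : Multiset ℕ) (v : ℕ) : Multiset ℕ := (v - 1) ::ₘ W.erase v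

lemma eq_of_decrAt_eq {W : Multiset ℕ} {x y : ℕ} (hx : x ∈ W) (hx0 : 0 < x)
    (h : decrAt W x = decrAt W y) : x = y := by
  by_contra hxy
  have hcount := congrArg (Multiset.count x) h
  simp only [decrAt, Multiset.count_cons, Multiset.count_erase_self,
    Multiset.count_erase_of_ne hxy] at hcount
  have := Multiset.count_pos.mpr hx
  split_ifs at hcount <;> omega

lemma exists_forall_pos_eq_or_eq {W M : Multiset ℕ} {u : ℕ} (hu : decrAt W u = M)
    (h : ∀ x ∈ W, ∀ y ∈ W, 0 < x → 0 < y → decrAt W x ≠ M → decrAt W y ≠ M →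
      decrAt W x = decrAt W y) :
    ∃ v, ∀ x ∈ W, 0 < x → x = u ∨ x = v := by
  by_cases hv : ∃ v ∈ W, 0 < v ∧ v ≠ u
  · obtain ⟨v, hvW, hv0, hvu⟩ := hv
    have hne : ∀ x ∈ W, 0 < x → x ≠ u → decrAt W x ≠ M := fun x hx hx0 hxu hxM =>
      hxu (eq_of_decrAt_eq hx hx0 (hxM.trans hu.symm))
    refine ⟨v, fun x hx hx0 => or_iff_not_imp_left.2 fun hxu => ?_⟩
    exact eq_of_decrAt_eq hx hx0 (h x hx v hvW hx0 hv0 (hne x hx hx0 hxu) (hne v hvW hv0 hvu))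
  · push Not at hv
    exact ⟨u, fun x hx hx0 => Or.inl (hv x hx hx0)⟩

section Reflection

variable {S W : Multiset ℕ} {b u : ℕ}

lemma tsub_mem_of_map_tsub_eq (hS : S.map (b - ·) = S) {x : ℕ} (hx : x ∈ S) : b - x ∈ S :=
  hS ▸ Multiset.mem_map_of_mem _ hx

lemma map_tsub_map_tsub (hSb : ∀ y ∈ S, y ≤ b) : (S.map (b - ·)).map (b - ·) = S := by
  rw [Multiset.map_map]
  conv_rhs => rw [← Multiset.map_id S]
  exact Multiset.map_congr rfl fun y hy => Nat.sub_sub_self (hSb y hy)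

lemma eq_replicate_add_replicate_of_map_tsub_eq (hSb : ∀ y ∈ S, y ≤ b)
    (hS : S.map (b - ·) = S) {x : ℕ} (hxb : x ≤ b) (hx : x ≠ b - x)
    (hsupp : ∀ y ∈ S, y = x ∨ y = b - x) :
    S = Multiset.replicate (S.count x) x + Multiset.replicate (S.count x) (b - x) := by
  have hcount : S.count (b - x) = S.count x := by
    by_cases hxS : x ∈ S
    · conv_lhs => rw [← hS]
      refine Multiset.count_map_eq_count _ _ (fun y hy z hz hyz => ?_) x hxS
      have := hSb y hy
      have := hSb z hz
      omega
    · rw [Multiset.count_eq_zero_of_notMem hxS, Multiset.count_eq_zero]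
      intro h
      exact hxS (Nat.sub_sub_self hxb ▸ tsub_mem_of_map_tsub_eq hS h)
  calc S = S.filter (· = x) + S.filter (fun y => ¬ y = x) := (Multiset.filter_add_not _ _).symm
    _ = _ := by
      rw [Multiset.filter_congr (p := fun y => ¬ y = x) (q := (· = b - x)) fun y hy => by grind,
        Multiset.filter_eq', Multiset.filter_eq', hcount]


lemma two_mul_eq_and_map_tsub_erase_eq (hWb : ∀ x ∈ W, x ≤ b) (hu : u ∈ W) (hu0 : 0 < u)
    (h : decrAt W u = W.map (b - ·)) :
    2 * u = b + 1 ∧ (W.erase u).map (b - ·) = W.erase u := by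
  have hW'b : ∀ x ∈ W.erase u, x ≤ b := fun x hx => hWb x (Multiset.mem_of_mem_erase hx)
  have h1 : (u - 1) ::ₘ W.erase u = (b - u) ::ₘ (W.erase u).map (b - ·) := by
    rw [← Multiset.map_cons (b - ·), Multiset.cons_erase hu]
    exact h
  have h2 : (b - (u - 1)) ::ₘ (W.erase u).map (b - ·) = u ::ₘ W.erase u := by
    simpa only [Multiset.map_cons, map_tsub_map_tsub hW'b, Nat.sub_sub_self (hWb u hu)] using
      congrArg (Multiset.map (b - ·)) h1
  -- `u ≠ u - 1`, so the copy of `u` on the right of `h2` must be `b - (u - 1)`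
  have hbu : 2 * u = b + 1 := by
    have c1 := congrArg (Multiset.count u) h1
    have c2 := congrArg (Multiset.count u) h2
    simp only [Multiset.count_cons] at c1 c2
    split_ifs at c1 c2 <;> omega
  refine ⟨hbu, ?_⟩
  rw [show u - 1 = b - u by omega] at h1
  exact ((Multiset.cons_inj_right _).mp h1).symm

lemma forall_mem_eq_or_forall_mem_eq {S : Multiset ℕ} {v : ℕ} (hbu : 2 * u = b + 1)
    (hSb : ∀ y ∈ S, y ≤ b) (hS : S.map (b - ·) = S)
    (hpos : ∀ y ∈ S, 0 < y → y = u ∨ y = v) :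
    (∀ y ∈ S, y = u - 1 ∨ y = u) ∨ (∀ y ∈ S, y = 0 ∨ y = b) := by
  by_contra! h
  obtain ⟨⟨y, hy, hyw, hyu⟩, z, hz, hz0, hzb⟩ := h
  -- `y` or `b - y` is `b`, and `z` or `b - z` is `u - 1`: two positive values besides `u`
  have := hpos y hy
  have := hpos z hz
  have := hpos (b - y) (tsub_mem_of_map_tsub_eq hS hy)
  have := hpos (b - z) (tsub_mem_of_map_tsub_eq hS hz)
  have := hSb y hy
  have := hSb z hz
  omega

lemma map_tsub_eq_of_decrAt_eq {v : ℕ} (hWb : ∀ x ∈ W, x ≤ b) (hu : u ∈ W) (hu0 : 0 < u)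
    (h : decrAt W u = W.map (b - ·)) (hpos : ∀ x ∈ W, 0 < x → x = u ∨ x = v) :
    W.map (b - ·) = Multiset.replicate ((W.card + 1) / 2) ((b - 1) / 2) +
        Multiset.replicate ((W.card - 1) / 2) ((b + 1) / 2) ∨
    W.map (b - ·) = Multiset.replicate ((W.card - 1) / 2) 0 + {(b - 1) / 2} +
        Multiset.replicate ((W.card - 1) / 2) b := by
  obtain ⟨hbu, hS⟩ := two_mul_eq_and_map_tsub_erase_eq hWb hu hu0 h
  have hSb : ∀ y ∈ W.erase u, y ≤ b := fun y hy => hWb y (Multiset.mem_of_mem_erase hy)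
  have hcard : W.card = (W.erase u).card + 1 := (Multiset.card_erase_add_one hu).symm
  rw [← h, decrAt, hcard, show (b - 1) / 2 = u - 1 by omega]
  rcases forall_mem_eq_or_forall_mem_eq hbu hSb hS
    (fun y hy => hpos y (Multiset.mem_of_mem_erase hy)) with hsupp | hsupp
  · left
    have hrep := eq_replicate_add_replicate_of_map_tsub_eq hSb hS (x := u - 1) (by omega)
      (by omega) (by rwa [show b - (u - 1) = u by omega])
    set c := (W.erase u).count (u - 1)
    rw [show b - (u - 1) = u by omega] at hrep
    rw [hrep, Multiset.card_add, Multiset.card_replicate, Multiset.card_replicate,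
      show (c + c + 1 + 1) / 2 = c + 1 by omega, show (c + c + 1 - 1) / 2 = c by omega,
      show (b + 1) / 2 = u by omega, Multiset.replicate_succ, Multiset.cons_add]
  · right
    have hrep := eq_replicate_add_replicate_of_map_tsub_eq hSb hS (x := 0) (Nat.zero_le b)
      (by omega) (by rwa [Nat.sub_zero])
    set c := (W.erase u).count 0
    rw [Nat.sub_zero] at hrep
    rw [hrep, Multiset.card_add, Multiset.card_replicate, Multiset.card_replicate,
      show (c + c + 1 - 1) / 2 = c by omega, ← Multiset.cons_zero, Multiset.add_cons, add_zero,
      Multiset.cons_add]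

end Reflection

section Kneser

variable {Ω : Type*} [DecidableEq Ω] {k : ℕ}

lemma pos_of_kneser_adj {α β : KVert Ω k} (h : (kneser Ω k).Adj α β) : 0 < k := by
  refine Nat.pos_of_ne_zero fun hk => h.1 (Subtype.ext ?_)
  rw [card_eq_zero.1 (α.2.trans hk), card_eq_zero.1 (β.2.trans hk)]

lemma kneser_adj_of_disjoint (hk : 0 < k) {α β : KVert Ω k} (h : Disjoint α.1 β.1) :
    (kneser Ω k).Adj α β := by
  refine ⟨fun hαβ => ?_, h⟩
  rw [hαβ, disjoint_self_iff_empty] at h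
  have := β.2
  rw [h, card_empty] at this
  omega

variable [Fintype Ω] (hcard : Fintype.card Ω = 2 * k + 1)
include hcard

lemma card_compl_erase (α : KVert Ω k) {y : Ω} (hy : y ∉ α.1) : (α.1ᶜ.erase y).card = k := by
  rw [card_erase_of_mem (mem_compl.2 hy), card_compl, hcard, α.2]
  omega

lemma kneser_adj_compl_erase (hk : 0 < k) (α : KVert Ω k) {y : Ω} (hy : y ∉ α.1) :
    (kneser Ω k).Adj α ⟨α.1ᶜ.erase y, card_compl_erase hcard α hy⟩ :=
  kneser_adj_of_disjoint hk (disjoint_of_subset_right (erase_subset _ _) disjoint_compl_right)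

lemma exists_eq_compl_erase_of_kneser_adj {α β : KVert Ω k} (h : (kneser Ω k).Adj α β) :
    ∃ y ∉ α.1, β.1 = α.1ᶜ.erase y := by
  have hsub : β.1 ⊆ α.1ᶜ := subset_compl_iff_disjoint_left.2 h.2
  obtain ⟨y, hy⟩ := card_eq_one.1 (show (α.1ᶜ \ β.1).card = 1 by
    rw [card_sdiff_of_subset hsub, card_compl, hcard, α.2, β.2]
    omega)
  refine ⟨y, mem_compl.1 (mem_sdiff.1 (hy ▸ mem_singleton_self y)).1, ?_⟩
  rw [erase_eq, ← hy, Finset.sdiff_sdiff_eq_self hsub]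

-- Two Kneser steps `β → βᶜ \ {p} → (β ∪ {p}) \ {q}` exchange one element.
lemma kneser_reachable_of_eq_insert_erase (hk : 0 < k) {β β' : KVert Ω k} {p q : Ω}
    (hp : p ∉ β.1) (hq : q ∈ β.1) (hβ' : β'.1 = (insert p β.1).erase q) :
    (kneser Ω k).Reachable β β' := by
  let γ : KVert Ω k := ⟨β.1ᶜ.erase p, card_compl_erase hcard β hp⟩
  have hqγ : q ∉ γ.1 := fun h => mem_compl.1 (mem_of_mem_erase h) hq
  have hγβ' : β' = ⟨γ.1ᶜ.erase q, card_compl_erase hcard γ hqγ⟩ :=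
    Subtype.ext <| hβ'.trans <| by rw [← compl_compl β.1, ← compl_erase]
  exact (kneser_adj_compl_erase hcard hk β hp).reachable.trans
    (hγβ' ▸ kneser_adj_compl_erase hcard hk γ hqγ).reachable

lemma kneser_reachable (hk : 0 < k) (α β : KVert Ω k) : (kneser Ω k).Reachable α β := by
  suffices ∀ n, ∀ β : KVert Ω k, (β.1 \ α.1).card = n → (kneser Ω k).Reachable β α from
    (this _ β rfl).symm
  intro n
  induction n with
  | zero =>
    intro β hβ
    have hβα : β = α := Subtype.ext <| eq_of_subset_of_card_le
      (sdiff_eq_empty_iff_subset.1 (card_eq_zero.1 hβ)) (by rw [α.2, β.2])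
    exact hβα ▸ .refl β
  | succ n ih =>
    intro β hβ
    obtain ⟨q, hq⟩ := card_pos.1 (show 0 < (β.1 \ α.1).card by omega)
    obtain ⟨p, hp⟩ := card_pos.1 (show 0 < (α.1 \ β.1).card by
      rw [card_sdiff_comm (α.2.trans β.2.symm)]
      omega)
    rw [mem_sdiff] at hp hq
    let β' : KVert Ω k := ⟨(insert p β.1).erase q, by
      rw [card_erase_of_mem (mem_insert_of_mem hq.1), card_insert_of_notMem hp.2, β.2]
      omega⟩
    have hβ'α : β'.1 \ α.1 = (β.1 \ α.1).erase q := by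
      ext x
      simp only [β', mem_sdiff, mem_erase, mem_insert]
      grind
    refine (kneser_reachable_of_eq_insert_erase hcard hk hp.2 hq.1 rfl).trans (ih β' ?_)
    rw [hβ'α, card_erase_of_mem (mem_sdiff.2 hq), hβ, Nat.add_sub_cancel]

lemma mem_nbrs_one_of_kneser_adj (hk : 0 < k) {C : Set (KVert Ω k)} {α γ : KVert Ω k}
    (hα : α ∈ C) (hγ : γ ∉ C) (h : (kneser Ω k).Adj α γ) : γ ∈ nbrs C 1 :=
  ⟨⟨α, hα, SimpleGraph.dist_eq_one_iff_adj.2 h⟩, fun β hβ => Nat.one_le_iff_ne_zero.2 <|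
    SimpleGraph.dist_ne_zero_iff_ne_and_reachable.2
      ⟨fun hβγ => hγ (hβγ ▸ hβ), kneser_reachable hcard hk β γ⟩⟩

end Kneser

lemma Multiset.map_univ_val_update {ι α : Type*} [Fintype ι] [DecidableEq ι] [DecidableEq α]
    (f : ι → α) (i : ι) (c : α) :
    univ.val.map (update f i c) = c ::ₘ (univ.val.map f).erase (f i) := by
  rw [← Multiset.cons_erase (mem_univ_val i), Multiset.map_cons, Multiset.map_cons,
    Multiset.erase_cons_head, update_self]
  refine congrArg _ (Multiset.map_congr rfl fun j hj => update_of_ne ?_ _ _)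
  rintro rfl
  exact univ.nodup.notMem_erase hj

section BlockProfile

variable {Ω ι : Type*} [DecidableEq Ω] [Fintype ι] (B : ι → Finset Ω)

def blockProfile (s : Finset Ω) : Multiset ℕ := univ.val.map fun i => (s ∩ B i).card

lemma le_of_mem_blockProfile {b : ℕ} (hBcard : ∀ i, (B i).card = b) {s : Finset Ω} {x : ℕ}
    (hx : x ∈ blockProfile B s) : x ≤ b := by
  obtain ⟨i, -, rfl⟩ := Multiset.mem_map.1 hx
  exact hBcard i ▸ card_le_card inter_subset_right

lemma card_blockProfile (s : Finset Ω) : (blockProfile B s).card = Fintype.card ι :=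
  Multiset.card_map _ _

lemma blockProfile_compl [Fintype Ω] {b : ℕ} (hBcard : ∀ i, (B i).card = b) (s : Finset Ω) :
    blockProfile B sᶜ = (blockProfile B s).map (b - ·) := by
  rw [blockProfile, blockProfile, Multiset.map_map]
  refine Multiset.map_congr rfl fun i _ => ?_
  rw [comp_apply, ← hBcard i, ← card_sdiff, inter_comm, ← sdiff_eq_inter_compl]

lemma blockProfile_erase (hB : Pairwise (Disjoint on B)) {s : Finset Ω} {y : Ω} {i : ι}
    (hy : y ∈ s) (hyi : y ∈ B i) :
    blockProfile B (s.erase y) = decrAt (blockProfile B s) (s ∩ B i).card := by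
  classical
  have hupd : (fun j => (s.erase y ∩ B j).card) =
      update (fun j => (s ∩ B j).card) i ((s ∩ B i).card - 1) := by
    funext j
    rw [erase_inter]
    by_cases hj : j = i
    · rw [hj, update_self, card_erase_of_mem (mem_inter.2 ⟨hy, hyi⟩)]
    · rw [update_of_ne hj,
        erase_eq_of_notMem fun h => disjoint_left.1 (hB hj) (mem_inter.1 h).2 hyi]
  rw [blockProfile, hupd, Multiset.map_univ_val_update]
  rfl

lemma blockProfile_map (hB : Pairwise (Disjoint on B)) (hBne : ∀ i, (B i).Nonempty)
    {g : Equiv.Perm Ω} (hg : ∀ i, ∃ j, (B i).map g.toEmbedding = B j) (s : Finset Ω) :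
    blockProfile B (s.map g.toEmbedding) = blockProfile B s := by
  choose f hf using hg
  have hf_inj : Injective f := fun i j hij => by
    by_contra hne
    have hBij : B i = B j := map_injective g.toEmbedding (by rw [hf, hf, hij])
    have : Disjoint (B i) (B j) := hB hne
    rw [hBij, disjoint_self_iff_empty] at this
    exact (hBne j).ne_empty this
  let e := Equiv.ofBijective f (Finite.injective_iff_bijective.1 hf_inj)
  rw [blockProfile, ← Multiset.map_univ_val_equiv e, Multiset.map_map]
  refine Multiset.map_congr rfl fun i _ => ?_
  rw [comp_apply, Equiv.ofBijective_apply, ← hf, ← map_inter, card_map]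

end BlockProfile

section Code

variable {Ω ι : Type*} [DecidableEq Ω] [Fintype ι] {k : ℕ} (B : ι → Finset Ω)

lemma blockProfile_eq_of_transOn (hB : Pairwise (Disjoint on B)) (hBne : ∀ i, (B i).Nonempty)
    {G : Set (Equiv.Perm Ω)} {S : Set (KVert Ω k)} (hG : transOn G S)
    (hpres : ∀ g ∈ G, ∀ i, ∃ j, (B i).map g.toEmbedding = B j) {x y : KVert Ω k}
    (hx : x ∈ S) (hy : y ∈ S) : blockProfile B x.1 = blockProfile B y.1 := by
  obtain ⟨g, hg, rfl⟩ := hG x hx y hy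
  exact (blockProfile_map B hB hBne (hpres g hg) x.1).symm

variable [Fintype Ω] (hcard : Fintype.card Ω = 2 * k + 1)
include hcard

lemma exists_kneser_adj_blockProfile_eq_decrAt (hk : 0 < k) (hB : Pairwise (Disjoint on B))
    (α : KVert Ω k) {x : ℕ} (hx : x ∈ blockProfile B α.1ᶜ) (hx0 : 0 < x) :
    ∃ γ, (kneser Ω k).Adj α γ ∧ blockProfile B γ.1 = decrAt (blockProfile B α.1ᶜ) x := by
  obtain ⟨i, -, rfl⟩ := Multiset.mem_map.1 hx
  obtain ⟨y, hy⟩ := card_pos.1 hx0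
  rw [mem_inter] at hy
  exact ⟨_, kneser_adj_compl_erase hcard hk α (mem_compl.1 hy.1),
    blockProfile_erase B hB hy.1 hy.2⟩

lemma exists_blockProfile_eq_decrAt_of_kneser_adj (hB : Pairwise (Disjoint on B))
    (hcover : ∀ y, ∃ i, y ∈ B i) {α β : KVert Ω k} (h : (kneser Ω k).Adj α β) :
    ∃ x ∈ blockProfile B α.1ᶜ, 0 < x ∧ blockProfile B β.1 = decrAt (blockProfile B α.1ᶜ) x := by
  obtain ⟨y, hy, hβ⟩ := exists_eq_compl_erase_of_kneser_adj hcard h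
  obtain ⟨i, hi⟩ := hcover y
  have hyi : y ∈ α.1ᶜ ∩ B i := mem_inter.2 ⟨mem_compl.2 hy, hi⟩
  exact ⟨_, Multiset.mem_map_of_mem _ (mem_univ_val i), card_pos.2 ⟨y, hyi⟩,
    hβ ▸ blockProfile_erase B hB (mem_compl.2 hy) hi⟩

lemma decrAt_eq_decrAt_of_transOn_nbrs (hk : 0 < k) (hB : Pairwise (Disjoint on B))
    (hBne : ∀ i, (B i).Nonempty) {C : Set (KVert Ω k)} (h1 : transOn (autC C) (nbrs C 1))
    (hpres : ∀ g ∈ autC C, ∀ i, ∃ j, (B i).map g.toEmbedding = B j) {M : Multiset ℕ}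
    (hC : ∀ γ ∈ C, blockProfile B γ.1 = M) {α : KVert Ω k} (hα : α ∈ C) :
    ∀ x ∈ blockProfile B α.1ᶜ, ∀ y ∈ blockProfile B α.1ᶜ, 0 < x → 0 < y →
      decrAt (blockProfile B α.1ᶜ) x ≠ M → decrAt (blockProfile B α.1ᶜ) y ≠ M →
      decrAt (blockProfile B α.1ᶜ) x = decrAt (blockProfile B α.1ᶜ) y := by
  intro x hx y hy hx0 hy0 hxM hyM
  obtain ⟨γ, hαγ, hγ⟩ := exists_kneser_adj_blockProfile_eq_decrAt B hcard hk hB α hx hx0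
  obtain ⟨γ', hαγ', hγ'⟩ := exists_kneser_adj_blockProfile_eq_decrAt B hcard hk hB α hy hy0
  have hnbrs : ∀ {δ}, (kneser Ω k).Adj α δ → blockProfile B δ.1 ≠ M → δ ∈ nbrs C 1 :=
    fun hαδ hδM => mem_nbrs_one_of_kneser_adj hcard hk hα (fun hδ => hδM (hC _ hδ)) hαδ
  rw [← hγ] at hxM ⊢
  rw [← hγ'] at hyM ⊢
  exact blockProfile_eq_of_transOn B hB hBne h1 hpres (hnbrs hαγ hxM) (hnbrs hαγ' hyM)

end Code

theorem stmt9_general {Ω : Type*} [Fintype Ω] [DecidableEq Ω] {k a b : ℕ}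
    (hcard : Fintype.card Ω = 2 * k + 1)
    (hb : 2 ≤ b)
    (B : Fin a → Finset Ω) (hBcard : ∀ i, (B i).card = b)
    (hBdisj : ∀ i j, i ≠ j → Disjoint (B i) (B j))
    (hBcover : Finset.univ.biUnion B = Finset.univ)
    (C : Set (KVert Ω k))
    (h0 : transOn (autC C) C) (h1 : transOn (autC C) (nbrs C 1))
    (hdelta : ∃ α ∈ C, ∃ β ∈ C, (kneser Ω k).Adj α β)
    (hpres : ∀ g ∈ autC C, ∀ i, ∃ j, (B i).map g.toEmbedding = B j) :
    (∀ α ∈ C, (Finset.univ.val.map fun i => (α.1 ∩ B i).card) =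
        Multiset.replicate ((a + 1) / 2) ((b - 1) / 2) +
          Multiset.replicate ((a - 1) / 2) ((b + 1) / 2)) ∨
    (∀ α ∈ C, (Finset.univ.val.map fun i => (α.1 ∩ B i).card) =
        Multiset.replicate ((a - 1) / 2) 0 + {(b - 1) / 2} +
          Multiset.replicate ((a - 1) / 2) b) := by
  obtain ⟨α, hα, β, hβ, hαβ⟩ := hdelta
  have hk := pos_of_kneser_adj hαβ
  have hB : Pairwise (Disjoint on B) := fun i j => hBdisj i j
  have hBne : ∀ i, (B i).Nonempty := fun i => card_pos.1 (by rw [hBcard i]; omega)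
  have hcover : ∀ y, ∃ i, y ∈ B i := fun y => by
    simpa using hBcover.ge (mem_univ y)
  set W := blockProfile B α.1ᶜ
  have hC : ∀ γ ∈ C, blockProfile B γ.1 = W.map (b - ·) := fun γ hγ => by
    rw [blockProfile_eq_of_transOn B hB hBne h0 hpres hγ hα, ← blockProfile_compl B hBcard,
      compl_compl]
  obtain ⟨u, hu, hu0, hβu⟩ := exists_blockProfile_eq_decrAt_of_kneser_adj B hcard hB hcover hαβ
  have hWu : decrAt W u = W.map (b - ·) := hβu ▸ hC β hβ
  obtain ⟨v, hv⟩ := exists_forall_pos_eq_or_eq hWu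
    (decrAt_eq_decrAt_of_transOn_nbrs B hcard hk hB hBne h1 hpres hC hα)
  have hWb : ∀ x ∈ W, x ≤ b := fun x hx => le_of_mem_blockProfile B hBcard hx
  have hWa : W.card = a := (card_blockProfile B _).trans (Fintype.card_fin a)
  rcases hWa ▸ map_tsub_eq_of_decrAt_eq hWb hu hu0 hWu hv with h | h
  · exact Or.inl fun γ hγ => (hC γ hγ).trans h
  · exact Or.inr fun γ hγ => (hC γ hγ).trans h

/-- imprimitive case, minimum distance 1: the multiset of block
intersection sizes of every codeword is one of two explicit multisets. -/
theorem stmt9 {Ω : Type*} [Fintype Ω] [DecidableEq Ω] {k a b : ℕ}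
    (hcard : Fintype.card Ω = 2 * k + 1)
    (ha : 2 ≤ a) (hb : 2 ≤ b) (hab : a * b = 2 * k + 1)
    (B : Fin a → Finset Ω) (hBcard : ∀ i, (B i).card = b)
    (hBdisj : ∀ i j, i ≠ j → Disjoint (B i) (B j))
    (hBcover : Finset.univ.biUnion B = Finset.univ)
    (C : Set (KVert Ω k)) (hC : C.Nontrivial)
    (h0 : transOn (autC C) C) (h1 : transOn (autC C) (nbrs C 1))
    (hdelta : ∃ α ∈ C, ∃ β ∈ C, (kneser Ω k).Adj α β)
    (hpres : ∀ g ∈ autC C, ∀ i, ∃ j, (B i).map g.toEmbedding = B j)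
    (hblocktrans : ∀ i j, ∃ g ∈ autC C, (B i).map g.toEmbedding = B j) :
    (∀ α ∈ C, (Finset.univ.val.map fun i => (α.1 ∩ B i).card) =
        Multiset.replicate ((a + 1) / 2) ((b - 1) / 2) +
          Multiset.replicate ((a - 1) / 2) ((b + 1) / 2)) ∨
    (∀ α ∈ C, (Finset.univ.val.map fun i => (α.1 ∩ B i).card) =
        Multiset.replicate ((a - 1) / 2) 0 + {(b - 1) / 2} +
          Multiset.replicate ((a - 1) / 2) b) :=
  stmt9_general hcard hb B hBcard hBdisj hBcover C h0 h1 hdelta hpres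
end

section
/- Let Ω be a (2k+1)-set partitioned into a blocks of size b (ab = 2k+1, a,b ≥ 2), and let C be the set of all k-subsets α of Ω whose multiset of block intersection sizes equals M, where M is one of: (1) {(b−1)/2 with multiplicity (a+1)/2, (b+1)/2 with multiplicity (a−1)/2}; (2) {0 with multiplicity (a−1)/2, (b−1)/2 once, b with multiplicity (a−1)/2}; (3) {b with multiplicity a₀, b₁ with multiplicity a₁} for integers a₀, a₁, b₁ ≥ 0 with a₀b + a₁b₁ = k and (a₀+a₁)b = 2k+1. Then the full stabiliser G ≅ S_b ≀ S_a of the partition in Sym(Ω) is contained in Aut(C) and acts transitively on C and on C₁, i.e. C is G-neighbour-transitive in O_{k+1}. -/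
open Finset

/-!
Let `c : Ω → Fin a` send a point to its block. The stabiliser of the partition consists of the
permutations `g` with `c ∘ g = σ ∘ c` for some `σ`, and its orbits on `k`-sets are exactly the
fibres of the block type. A neighbour of `α` in the odd graph is the complement of `α` minus one
point, so its type is obtained from the complementary type `b - M` by lowering one entry by one.
For each of the three multisets `M`, such a lowering either gives back `M` (the neighbour lies in
`C`) or takes place at one fixed value, so all of `C₁` has a single type.
-/

theorem Equiv.exists_comp_eq_of_card_fiber_eq {α β γ : Type*} [Fintype α] [Fintype β]
    [DecidableEq γ] (f : α → γ) (g : β → γ) (h : ∀ z, #{x | f x = z} = #{y | g y = z}) :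
    ∃ e : α ≃ β, ∀ x, g (e x) = f x := by
  have e : ∀ z, { x // f x = z } ≃ { y // g y = z } := fun z =>
    Fintype.equivOfCardEq (by rw [Fintype.card_subtype, Fintype.card_subtype, h])
  exact ⟨Equiv.ofFiberEquiv e, Equiv.ofFiberEquiv_map e⟩

theorem Equiv.exists_comp_eq_of_map_univ_eq {α β γ : Type*} [Fintype α] [Fintype β]
    [DecidableEq γ] (f : α → γ) (g : β → γ) (h : univ.val.map f = univ.val.map g) :
    ∃ e : α ≃ β, ∀ x, g (e x) = f x := by
  refine Equiv.exists_comp_eq_of_card_fiber_eq f g fun z => ?_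
  have := congrArg (Multiset.count z) h
  simp only [Multiset.count_map] at this
  simpa [Finset.card, Finset.filter_val, eq_comm] using this

theorem Multiset.cons_map_univ_eq_of_forall_ne {ι α : Type*} [Fintype ι] [DecidableEq ι]
    (f g : ι → α) (i₀ : ι) (h : ∀ i ≠ i₀, f i = g i) :
    g i₀ ::ₘ univ.val.map f = f i₀ ::ₘ univ.val.map g := by
  have huniv : (univ : Finset ι).val = i₀ ::ₘ (univ.erase i₀).val := by
    rw [erase_val, Multiset.cons_erase (mem_univ_val i₀)]
  have hrest : (univ.erase i₀).val.map f = (univ.erase i₀).val.map g :=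
    Multiset.map_congr rfl fun i hi => h i (ne_of_mem_erase hi)
  rw [huniv, Multiset.map_cons, Multiset.map_cons, hrest, Multiset.cons_swap]

theorem Finset.card_filter_decide_mem_eq {α : Type*} [DecidableEq α] {B B' s t : Finset α}
    (hB : #B = #B') (h : #(s ∩ B) = #(t ∩ B')) (p : Bool) :
    #{x ∈ B | decide (x ∈ s) = p} = #{x ∈ B' | decide (x ∈ t) = p} := by
  cases p
  · simp only [decide_eq_false_iff_not, filter_notMem_eq_sdiff, card_sdiff, hB, h]
  · simp only [decide_eq_true_eq, filter_mem_eq_inter, inter_comm B, inter_comm B', h]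

-- Lowering an entry `w ≥ 1` of `T` by one gives `M`, unless `w = u`.
def LowersToExceptAt (T M : Multiset ℕ) (u : ℕ) : Prop :=
  ∀ w ∈ T, 1 ≤ w → w = u ∨ (w - 1) ::ₘ T = w ::ₘ M

theorem LowersToExceptAt.eq_cons_erase {T M X : Multiset ℕ} {u v : ℕ}
    (hT : LowersToExceptAt T M u) (hv : 1 ≤ v) (hX : v ::ₘ X = (v - 1) ::ₘ T)
    (hXM : X ≠ M) :
    X = (u - 1) ::ₘ T.erase u := by
  have hvT : v ∈ T := by
    have : v ∈ (v - 1) ::ₘ T := hX ▸ Multiset.mem_cons_self v X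
    exact (Multiset.mem_cons.mp this).resolve_left (by omega)
  rcases hT v hvT hv with rfl | hM
  · rw [← Multiset.cons_erase hvT, Multiset.cons_swap] at hX
    exact Multiset.cons_inj_right v |>.mp hX
  · exact absurd (Multiset.cons_inj_right v |>.mp (hX.trans hM)) hXM

section LowersToExceptAt

open Multiset (replicate map_replicate mem_replicate count_replicate count_cons count_add)

theorem lowersToExceptAt_balanced {a b : ℕ} (ha : Odd a) (hb : Odd b) {M : Multiset ℕ}
    (hM : M = replicate ((a + 1) / 2) ((b - 1) / 2) + replicate ((a - 1) / 2) ((b + 1) / 2)) :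
    LowersToExceptAt (M.map (b - ·)) M ((b - 1) / 2) := by
  obtain ⟨q, rfl⟩ := ha
  obtain ⟨s, rfl⟩ := hb
  replace hM : M = replicate (q + 1) s + replicate q (s + 1) := by
    rw [hM]; congr 2 <;> omega
  have hT : M.map (2 * s + 1 - ·) = replicate (q + 1) (s + 1) + replicate q s := by
    rw [hM, Multiset.map_add, map_replicate, map_replicate]; congr 2 <;> omega
  intro w hw hw1
  rw [hT] at hw ⊢
  simp only [Multiset.mem_add, mem_replicate] at hw
  obtain rfl | rfl : w = s + 1 ∨ w = s := by omega
  · right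
    ext n
    simp only [hM, count_cons, count_add, count_replicate]
    split_ifs <;> omega
  · left; omega

theorem lowersToExceptAt_extreme {a b : ℕ} (hb : Odd b) {M : Multiset ℕ}
    (hM : M = replicate ((a - 1) / 2) 0 + {(b - 1) / 2} + replicate ((a - 1) / 2) b) :
    LowersToExceptAt (M.map (b - ·)) M b := by
  obtain ⟨s, rfl⟩ := hb
  set q := (a - 1) / 2
  replace hM : M = replicate q 0 + {s} + replicate q (2 * s + 1) := by
    rw [hM]; congr 3; omega
  have hT : M.map (2 * s + 1 - ·) = replicate q (2 * s + 1) + {s + 1} + replicate q 0 := by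
    rw [hM, Multiset.map_add, Multiset.map_add, map_replicate, map_replicate,
      Multiset.map_singleton]
    congr 3 <;> omega
  intro w hw hw1
  rw [hT] at hw ⊢
  simp only [Multiset.mem_add, mem_replicate, Multiset.mem_singleton] at hw
  obtain rfl | rfl : w = 2 * s + 1 ∨ w = s + 1 := by omega
  · left; rfl
  · right
    ext n
    simp only [hM, count_cons, count_add, count_replicate, Multiset.count_singleton]
    split_ifs <;> omega

theorem lowersToExceptAt_replicate_add_replicate (b a₀ a₁ b₁ : ℕ) :
    LowersToExceptAt ((replicate a₀ b + replicate a₁ b₁).map (b - ·))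
      (replicate a₀ b + replicate a₁ b₁) (b - b₁) := by
  intro w hw hw1
  simp only [Multiset.map_add, map_replicate, Multiset.mem_add, mem_replicate] at hw
  left; omega

end LowersToExceptAt

theorem adj_and_notMem_of_mem_nbrs_one {Ω : Type*} [Fintype Ω] [DecidableEq Ω] {k : ℕ}
    {C : Set (KVert Ω k)} {γ : KVert Ω k} (hγ : γ ∈ nbrs C 1) :
    (∃ α ∈ C, (kneser Ω k).Adj α γ) ∧ γ ∉ C := by
  obtain ⟨⟨α, hα, hdist⟩, hmin⟩ := hγ
  refine ⟨⟨α, hα, SimpleGraph.dist_eq_one_iff_adj.mp hdist⟩, fun hγC => ?_⟩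
  simpa using hmin γ hγC

section Blocks

variable {Ω ι : Type*} [Fintype Ω] [DecidableEq ι]

def block (c : Ω → ι) (i : ι) : Finset Ω := univ.filter (c · = i)

variable {c : Ω → ι}

@[simp]
theorem mem_block {x : Ω} {i : ι} : x ∈ block c i ↔ c x = i := by
  simp [block]

theorem map_block_of_comp_eq {g : Equiv.Perm Ω} {σ : Equiv.Perm ι}
    (h : ∀ x, c (g x) = σ (c x)) (i : ι) :
    (block c i).map g.toEmbedding = block c (σ i) := by
  ext y
  rw [mem_map_equiv, mem_block, mem_block, ← σ.apply_eq_iff_eq, ← h, g.apply_symm_apply]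

theorem exists_perm_comp_eq_of_map_block [Fintype ι] (hc : Function.Surjective c)
    {g : Equiv.Perm Ω} (hg : ∀ i, ∃ j, (block c i).map g.toEmbedding = block c j) :
    ∃ σ : Equiv.Perm ι, ∀ x, c (g x) = σ (c x) := by
  choose f hf using hg
  have hcomp : ∀ x, c (g x) = f (c x) := fun x => by
    rw [← mem_block, ← hf, mem_map_equiv, g.symm_apply_apply, mem_block]
  have hsurj : Function.Surjective f := fun j => by
    obtain ⟨y, rfl⟩ := hc j
    exact ⟨c (g.symm y), by rw [← hcomp, g.apply_symm_apply]⟩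
  exact ⟨Equiv.ofBijective f ⟨Finite.injective_iff_surjective.mpr hsurj, hsurj⟩, hcomp⟩

variable [DecidableEq Ω]

theorem card_compl_inter_block {b : ℕ} (hb : ∀ i, #(block c i) = b) (s : Finset Ω) (i : ι) :
    #(sᶜ ∩ block c i) = b - #(s ∩ block c i) := by
  rw [inter_comm, ← sdiff_eq_inter_compl, card_sdiff, hb]

variable [Fintype ι]

def blockType (c : Ω → ι) (s : Finset Ω) : Multiset ℕ :=
  univ.val.map fun i => #(s ∩ block c i)

theorem exists_eq_block_of_disjoint_of_biUnion_eq_univ {B : ι → Finset Ω}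
    (hdisj : ∀ i j, i ≠ j → Disjoint (B i) (B j)) (hcover : univ.biUnion B = univ) :
    ∃ c : Ω → ι, ∀ i, B i = block c i := by
  have hmem : ∀ x, ∃ i, x ∈ B i := fun x => by
    simpa using (hcover ▸ mem_univ x : x ∈ univ.biUnion B)
  choose c hc using hmem
  refine ⟨c, fun i => ext fun x => ⟨fun hx => ?_, fun hx => mem_block.mp hx ▸ hc x⟩⟩
  by_contra hne
  exact disjoint_left.mp (hdisj (c x) i fun h => hne (by simp [h])) (hc x) hx

theorem blockType_map_of_comp_eq {g : Equiv.Perm Ω} {σ : Equiv.Perm ι}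
    (h : ∀ x, c (g x) = σ (c x)) (s : Finset Ω) :
    blockType c (s.map g.toEmbedding) = blockType c s := by
  rw [blockType, blockType]
  conv_lhs => rw [← Multiset.map_univ_val_equiv σ, Multiset.map_map]
  refine Multiset.map_congr rfl fun i _ => ?_
  rw [Function.comp_apply, ← map_block_of_comp_eq h, ← map_inter, card_map]

-- Colour `x` by its (relabelled) block and by membership in `s`, resp. `t`; equal fibre sizes
-- give a permutation carrying one colouring to the other.
theorem exists_perm_map_eq_of_blockType_eq {b : ℕ} (hb : ∀ i, #(block c i) = b)
    {s t : Finset Ω} (h : blockType c s = blockType c t) :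
    ∃ g : Equiv.Perm Ω, ∃ σ : Equiv.Perm ι,
      (∀ x, c (g x) = σ (c x)) ∧ s.map g.toEmbedding = t := by
  obtain ⟨σ, hσ⟩ := Equiv.exists_comp_eq_of_map_univ_eq _ _ h
  have hfiber : ∀ z : ι × Bool, #{x | (σ (c x), decide (x ∈ s)) = z}
      = #{y | (c y, decide (y ∈ t)) = z} := by
    rintro ⟨j, p⟩
    have hs : ({x | (σ (c x), decide (x ∈ s)) = (j, p)} : Finset Ω)
        = {x ∈ block c (σ.symm j) | decide (x ∈ s) = p} := by
      ext x; simp [Equiv.eq_symm_apply]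
    have ht : ({y | (c y, decide (y ∈ t)) = (j, p)} : Finset Ω)
        = {y ∈ block c j | decide (y ∈ t) = p} := by
      ext y; simp
    rw [hs, ht]
    refine card_filter_decide_mem_eq (by rw [hb, hb]) ?_ p
    simpa using (hσ (σ.symm j)).symm
  obtain ⟨g, hg⟩ := Equiv.exists_comp_eq_of_card_fiber_eq _ _ hfiber
  simp only [Prod.mk.injEq, decide_eq_decide] at hg
  refine ⟨g, σ, fun x => (hg x).1, ext fun y => ?_⟩
  rw [mem_map_equiv, ← (hg _).2, g.apply_symm_apply]

-- The complement of `s` is `t` plus one point `p`: only the entry of the block of `p` drops by one.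
theorem exists_cons_blockType_eq_of_disjoint {k b : ℕ} (hcard : Fintype.card Ω = 2 * k + 1)
    (hb : ∀ i, #(block c i) = b) {s t : Finset Ω} (hs : #s = k) (ht : #t = k)
    (hst : Disjoint s t) :
    ∃ v, 1 ≤ v ∧ v ::ₘ blockType c t = (v - 1) ::ₘ (blockType c s).map (b - ·) := by
  obtain ⟨p, hpt, hins⟩ : ∃ p ∉ t, insert p t = sᶜ := exists_eq_insert_iff.mpr
    ⟨subset_compl_iff_disjoint_left.mpr hst, by rw [card_compl, hcard, hs, ht]; omega⟩
  have hne : ∀ i ≠ c p, #(t ∩ block c i) = #(sᶜ ∩ block c i) := fun i hi => by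
    rw [← hins, insert_inter_of_notMem (by simpa using Ne.symm hi)]
  have hp : #(sᶜ ∩ block c (c p)) = #(t ∩ block c (c p)) + 1 := by
    rw [← hins, insert_inter_of_mem (by simp), card_insert_of_notMem (by simp [hpt])]
  refine ⟨#(sᶜ ∩ block c (c p)), by omega, ?_⟩
  rw [hp, Nat.add_sub_cancel, ← hp, blockType, blockType, Multiset.map_map]
  convert Multiset.cons_map_univ_eq_of_forall_ne _ _ (c p) hne using 3
  exact (card_compl_inter_block hb s _).symm

variable {k : ℕ}

theorem image_permV_setOf_blockType_eq {g : Equiv.Perm Ω} {σ : Equiv.Perm ι}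
    (h : ∀ x, c (g x) = σ (c x)) (M : Multiset ℕ) :
    permV g '' {α : KVert Ω k | blockType c α.1 = M} = {α | blockType c α.1 = M} := by
  ext y
  constructor
  · rintro ⟨x, hx, rfl⟩
    exact (blockType_map_of_comp_eq h x.1).trans hx
  · intro hy
    have hy' : (y.1.map g.symm.toEmbedding).map g.toEmbedding = y.1 := by
      simp [map_map]
    refine ⟨permV g.symm y, ?_, Subtype.ext hy'⟩
    exact (blockType_map_of_comp_eq h _).symm.trans (hy' ▸ hy)

theorem transOn_of_blockType_eq {b : ℕ} (hb : ∀ i, #(block c i) = b) {S : Set (KVert Ω k)}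
    (hS : ∀ x ∈ S, ∀ y ∈ S, blockType c x.1 = blockType c y.1) :
    transOn {g | ∀ i, ∃ j, (block c i).map g.toEmbedding = block c j} S := by
  intro x hx y hy
  obtain ⟨g, σ, hσ, hg⟩ := exists_perm_map_eq_of_blockType_eq hb (hS x hx y hy)
  exact ⟨g, fun i => ⟨σ i, map_block_of_comp_eq hσ i⟩, Subtype.ext hg⟩

theorem blockType_eq_of_mem_nbrs_one {b u : ℕ} {M : Multiset ℕ}
    (hcard : Fintype.card Ω = 2 * k + 1) (hb : ∀ i, #(block c i) = b)
    (hM : LowersToExceptAt (M.map (b - ·)) M u) {γ : KVert Ω k}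
    (hγ : γ ∈ nbrs {α | blockType c α.1 = M} 1) :
    blockType c γ.1 = (u - 1) ::ₘ (M.map (b - ·)).erase u := by
  obtain ⟨⟨α, hα, hadj⟩, hγC⟩ := adj_and_notMem_of_mem_nbrs_one hγ
  obtain ⟨v, hv, hvγ⟩ := exists_cons_blockType_eq_of_disjoint hcard hb α.2 γ.2 hadj.2
  rw [show blockType c α.1 = M from hα] at hvγ
  exact hM.eq_cons_erase hv hvγ hγC

end Blocks

theorem stmt10_general {Ω : Type*} [Fintype Ω] [DecidableEq Ω] {k a b : ℕ}
    (hcard : Fintype.card Ω = 2 * k + 1)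
    (hab : a * b = 2 * k + 1)
    (B : Fin a → Finset Ω) (hBcard : ∀ i, (B i).card = b)
    (hBdisj : ∀ i j, i ≠ j → Disjoint (B i) (B j))
    (hBcover : Finset.univ.biUnion B = Finset.univ)
    (M : Multiset ℕ)
    (hM : M = Multiset.replicate ((a + 1) / 2) ((b - 1) / 2) +
            Multiset.replicate ((a - 1) / 2) ((b + 1) / 2) ∨
          M = Multiset.replicate ((a - 1) / 2) 0 + {(b - 1) / 2} +
            Multiset.replicate ((a - 1) / 2) b ∨
          ∃ a₀ a₁ b₁ : ℕ, a₀ * b + a₁ * b₁ = k ∧ (a₀ + a₁) * b = 2 * k + 1 ∧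
            M = Multiset.replicate a₀ b + Multiset.replicate a₁ b₁)
    (C : Set (KVert Ω k))
    (hCdef : C = {α | (Finset.univ.val.map fun i => (α.1 ∩ B i).card) = M})
    (G : Set (Equiv.Perm Ω))
    (hGdef : G = {g | ∀ i, ∃ j, (B i).map g.toEmbedding = B j}) :
    G ⊆ autC C ∧ transOn G C ∧ transOn G (nbrs C 1) := by
  obtain ⟨c, hc⟩ := exists_eq_block_of_disjoint_of_biUnion_eq_univ hBdisj hBcover
  obtain rfl : B = block c := funext hc
  obtain ⟨ha_odd, hb_odd⟩ := Nat.odd_mul.mp (hab ▸ odd_two_mul_add_one k)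
  have hc_surj : Function.Surjective c := fun i => by
    obtain ⟨x, hx⟩ := card_pos.mp (hBcard i ▸ hb_odd.pos)
    exact ⟨x, mem_block.mp hx⟩
  obtain ⟨u, hu⟩ : ∃ u, LowersToExceptAt (M.map (b - ·)) M u := by
    rcases hM with hM | hM | ⟨a₀, a₁, b₁, -, -, rfl⟩
    exacts [⟨_, lowersToExceptAt_balanced ha_odd hb_odd hM⟩,
      ⟨_, lowersToExceptAt_extreme hb_odd hM⟩,
      ⟨_, lowersToExceptAt_replicate_add_replicate b a₀ a₁ b₁⟩]
  subst hCdef hGdef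
  refine ⟨fun g hg => ?_, transOn_of_blockType_eq hBcard fun x hx y hy => hx.trans hy.symm,
    transOn_of_blockType_eq hBcard fun x hx y hy => ?_⟩
  · obtain ⟨σ, hσ⟩ := exists_perm_comp_eq_of_map_block hc_surj hg
    exact image_permV_setOf_blockType_eq hσ M
  · exact (blockType_eq_of_mem_nbrs_one hcard hBcard hu hx).trans
      (blockType_eq_of_mem_nbrs_one hcard hBcard hu hy).symm

/-- the codes `C_imp(a,b;M)`, for the three listed multisets `M`, are
neighbour-transitive for the full stabiliser `S_b ≀ S_a` of the partition. -/
theorem stmt10 {Ω : Type*} [Fintype Ω] [DecidableEq Ω] {k a b : ℕ}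
    (hcard : Fintype.card Ω = 2 * k + 1)
    (ha : 2 ≤ a) (hb : 2 ≤ b) (hab : a * b = 2 * k + 1)
    (B : Fin a → Finset Ω) (hBcard : ∀ i, (B i).card = b)
    (hBdisj : ∀ i j, i ≠ j → Disjoint (B i) (B j))
    (hBcover : Finset.univ.biUnion B = Finset.univ)
    (M : Multiset ℕ)
    (hM : M = Multiset.replicate ((a + 1) / 2) ((b - 1) / 2) +
            Multiset.replicate ((a - 1) / 2) ((b + 1) / 2) ∨
          M = Multiset.replicate ((a - 1) / 2) 0 + {(b - 1) / 2} +
            Multiset.replicate ((a - 1) / 2) b ∨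
          ∃ a₀ a₁ b₁ : ℕ, a₀ * b + a₁ * b₁ = k ∧ (a₀ + a₁) * b = 2 * k + 1 ∧
            M = Multiset.replicate a₀ b + Multiset.replicate a₁ b₁)
    (C : Set (KVert Ω k))
    (hCdef : C = {α | (Finset.univ.val.map fun i => (α.1 ∩ B i).card) = M})
    (G : Set (Equiv.Perm Ω))
    (hGdef : G = {g | ∀ i, ∃ j, (B i).map g.toEmbedding = B j}) :
    G ⊆ autC C ∧ transOn G C ∧ transOn G (nbrs C 1) :=
  stmt10_general hcard hab B hBcard hBdisj hBcover M hM C hCdef G hGdef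
end

section
/- Let C be a neighbour-transitive code in K(n,k) with minimum distance δ ≥ 3 and let α ∈ C. Then the stabiliser Aut(C)_α acts transitively on the set Γ₁(α) of neighbours of α, hence acts k-homogeneously on Ω \ α (equivalently (n−2k)-homogeneously on Ω \ α, a set of size n−k). -/
open Finset

/-!
A neighbour `γ` of a codeword `α` has `α` as its unique nearest codeword, since two codewords
adjacent to `γ` are at distance at most `2 < δ`. So any automorphism of `C` carrying one
neighbour of `α` to another must fix `α`, and neighbour-transitivity yields transitivity of
`Aut(C)_α` on `Γ₁(α)`, i.e. on the `k`-subsets of `Ω \ α`. Taking complements in `Ω \ α` turns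
this into transitivity on its `(n - 2k)`-subsets.
-/

namespace SimpleGraph

variable {V : Type*} {G : SimpleGraph V} {C : Set V}

theorem eq_of_adj_of_adj_of_three_le_dist (hC : ∀ α ∈ C, ∀ β ∈ C, α ≠ β → 3 ≤ G.dist α β)
    {α β γ : V} (hα : α ∈ C) (hβ : β ∈ C) (hαγ : G.Adj α γ) (hβγ : G.Adj β γ) : α = β := by
  by_contra hne
  have := (hC α hα β hβ hne).trans (G.dist_le (.cons hαγ (.cons hβγ.symm .nil)))
  simp at this

theorem one_le_dist_of_adj_of_three_le_dist (hC : ∀ α ∈ C, ∀ β ∈ C, α ≠ β → 3 ≤ G.dist α β)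
    {α β γ : V} (hα : α ∈ C) (hβ : β ∈ C) (hαγ : G.Adj α γ) : 1 ≤ G.dist β γ := by
  by_cases hβα : β = α
  · rw [hβα, dist_eq_one_iff_adj.mpr hαγ]
  have hβα_dist := hC β hβ α hα hβα
  -- `dist` is `0` between unreachable vertices, so reachability must come from `3 ≤ dist β α`.
  have hreach : G.Reachable β γ :=
    (Reachable.of_dist_ne_zero (by omega)).trans hαγ.reachable
  refine Nat.one_le_iff_ne_zero.mpr fun h => ?_
  obtain rfl := hreach.dist_eq_zero_iff.mp h
  rw [dist_comm, dist_eq_one_iff_adj.mpr hαγ] at hβα_dist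
  omega

end SimpleGraph

theorem Finset.map_eq_of_map_sdiff_eq {α β : Type*} [DecidableEq α] [DecidableEq β]
    {f : α ↪ β} {u s : Finset α} {u' t : Finset β} (hs : s ⊆ u) (ht : t ⊆ u')
    (hu : u.map f = u') (hsu : (u \ s).map f = u' \ t) : s.map f = t := by
  rw [← sdiff_sdiff_eq_self hs, map_sdiff, hu, hsu, sdiff_sdiff_eq_self ht]

theorem Finset.map_compl_perm {α : Type*} [Fintype α] [DecidableEq α] (g : Equiv.Perm α)
    (s : Finset α) : sᶜ.map g.toEmbedding = (s.map g.toEmbedding)ᶜ := by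
  rw [compl_eq_univ_sdiff, compl_eq_univ_sdiff, map_sdiff, map_univ_equiv]

section Kneser

variable {Ω : Type*} [DecidableEq Ω] {k : ℕ}

theorem kneser_adj_iff (hk : k ≠ 0) {a b : KVert Ω k} :
    (kneser Ω k).Adj a b ↔ Disjoint a.1 b.1 := by
  refine ⟨And.right, fun h => ⟨?_, h⟩⟩
  rintro rfl
  have hcard := a.2
  rw [(disjoint_self_iff_empty _).mp h, card_empty] at hcard
  exact hk hcard.symm

theorem permV_injective (g : Equiv.Perm Ω) : Function.Injective (permV (k := k) g) :=
  fun _ _ h => Subtype.ext (map_injective g.toEmbedding (congrArg Subtype.val h))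

theorem kneser_adj_permV (g : Equiv.Perm Ω) {a b : KVert Ω k} (h : (kneser Ω k).Adj a b) :
    (kneser Ω k).Adj (permV g a) (permV g b) :=
  ⟨(permV_injective g).ne h.1, (disjoint_map g.toEmbedding).mpr h.2⟩

theorem permV_mem_of_mem_autC {C : Set (KVert Ω k)} {g : Equiv.Perm Ω} (hg : g ∈ autC C)
    {α : KVert Ω k} (hα : α ∈ C) : permV g α ∈ C :=
  hg ▸ Set.mem_image_of_mem _ hα

theorem mem_nbrs_one_of_adj [Fintype Ω] {C : Set (KVert Ω k)}
    (hC : ∀ α ∈ C, ∀ β ∈ C, α ≠ β → 3 ≤ (kneser Ω k).dist α β)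
    {α γ : KVert Ω k} (hα : α ∈ C) (hαγ : (kneser Ω k).Adj α γ) : γ ∈ nbrs C 1 :=
  ⟨⟨α, hα, SimpleGraph.dist_eq_one_iff_adj.mpr hαγ⟩,
    fun _ hβ => SimpleGraph.one_le_dist_of_adj_of_three_le_dist hC hα hβ hαγ⟩

variable [Fintype Ω] {C : Set (KVert Ω k)}

theorem exists_autC_fix_map_of_adj (h1 : transOn (autC C) (nbrs C 1))
    (hC : ∀ α ∈ C, ∀ β ∈ C, α ≠ β → 3 ≤ (kneser Ω k).dist α β)
    {α γ₁ γ₂ : KVert Ω k} (hα : α ∈ C)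
    (hγ₁ : (kneser Ω k).Adj α γ₁) (hγ₂ : (kneser Ω k).Adj α γ₂) :
    ∃ g ∈ autC C, permV g α = α ∧ permV g γ₁ = γ₂ := by
  obtain ⟨g, hg, hgγ⟩ :=
    h1 γ₁ (mem_nbrs_one_of_adj hC hα hγ₁) γ₂ (mem_nbrs_one_of_adj hC hα hγ₂)
  have hgα_adj : (kneser Ω k).Adj (permV g α) γ₂ := hgγ ▸ kneser_adj_permV g hγ₁
  exact ⟨g, hg,
    SimpleGraph.eq_of_adj_of_adj_of_three_le_dist hC (permV_mem_of_mem_autC hg hα) hα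
      hgα_adj hγ₂, hgγ⟩

theorem exists_autC_fix_map_of_subset_compl (hk : k ≠ 0) (h1 : transOn (autC C) (nbrs C 1))
    (hC : ∀ α ∈ C, ∀ β ∈ C, α ≠ β → 3 ≤ (kneser Ω k).dist α β)
    {α : KVert Ω k} (hα : α ∈ C) {s t : Finset Ω} (hs : s ⊆ α.1ᶜ) (ht : t ⊆ α.1ᶜ)
    (hsk : s.card = k) (htk : t.card = k) :
    ∃ g ∈ autC C, permV g α = α ∧ s.map g.toEmbedding = t := by
  have hadj {u : Finset Ω} (hu : u ⊆ α.1ᶜ) (huk : u.card = k) :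
      (kneser Ω k).Adj α ⟨u, huk⟩ :=
    (kneser_adj_iff hk).mpr (subset_compl_iff_disjoint_left.mp hu)
  obtain ⟨g, hg, hgα, hgs⟩ := exists_autC_fix_map_of_adj h1 hC hα (hadj hs hsk) (hadj ht htk)
  exact ⟨g, hg, hgα, congrArg Subtype.val hgs⟩

end Kneser

theorem stmt11_general {Ω : Type*} [Fintype Ω] [DecidableEq Ω] {n k : ℕ}
    (hcard : Fintype.card Ω = n) (hk : 2 ≤ k) (hkn : 2 * k + 1 ≤ n)
    (C : Set (KVert Ω k))
    (h1 : transOn (autC C) (nbrs C 1))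
    (hdelta : ∀ α ∈ C, ∀ β ∈ C, α ≠ β → 3 ≤ (kneser Ω k).dist α β)
    (α : KVert Ω k) (hα : α ∈ C) :
    (∀ γ₁ γ₂ : KVert Ω k, (kneser Ω k).Adj α γ₁ → (kneser Ω k).Adj α γ₂ →
      ∃ g ∈ autC C, permV g α = α ∧ permV g γ₁ = γ₂) ∧
    (∀ s t : Finset Ω, s ⊆ α.1ᶜ → t ⊆ α.1ᶜ → s.card = k → t.card = k →
      ∃ g ∈ autC C, permV g α = α ∧ s.map g.toEmbedding = t) ∧
    (∀ s t : Finset Ω, s ⊆ α.1ᶜ → t ⊆ α.1ᶜ →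
      s.card = n - 2 * k → t.card = n - 2 * k →
      ∃ g ∈ autC C, permV g α = α ∧ s.map g.toEmbedding = t) := by
  have hk0 : k ≠ 0 := by omega
  refine ⟨fun γ₁ γ₂ => exists_autC_fix_map_of_adj h1 hdelta hα,
    fun s t => exists_autC_fix_map_of_subset_compl hk0 h1 hdelta hα, ?_⟩
  intro s t hs ht hsc htc
  have hcompl_card {u : Finset Ω} (hu : u ⊆ α.1ᶜ) (huc : u.card = n - 2 * k) :
      (α.1ᶜ \ u).card = k := by
    rw [card_sdiff_of_subset hu, card_compl, α.2, hcard, huc]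
    omega
  obtain ⟨g, hg, hgα, hgsc⟩ := exists_autC_fix_map_of_subset_compl hk0 h1 hdelta hα
    sdiff_subset sdiff_subset (hcompl_card hs hsc) (hcompl_card ht htc)
  have hgαc : α.1ᶜ.map g.toEmbedding = α.1ᶜ := by
    rw [map_compl_perm]
    exact congrArg (fun a : KVert Ω k => a.1ᶜ) hgα
  exact ⟨g, hg, hgα, map_eq_of_map_sdiff_eq hs ht hgαc hgsc⟩

/-- for a neighbour-transitive code of minimum distance at least 3,
the stabiliser of a codeword `α` is transitive on the neighbours of `α`, hence
`k`-homogeneous (equivalently `(n-2k)`-homogeneous) on `Ω \ α`. -/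
theorem stmt11 {Ω : Type*} [Fintype Ω] [DecidableEq Ω] {n k : ℕ}
    (hcard : Fintype.card Ω = n) (hk : 2 ≤ k) (hkn : 2 * k + 1 ≤ n)
    (C : Set (KVert Ω k)) (hC : C.Nontrivial)
    (h0 : transOn (autC C) C) (h1 : transOn (autC C) (nbrs C 1))
    (hdelta : ∀ α ∈ C, ∀ β ∈ C, α ≠ β → 3 ≤ (kneser Ω k).dist α β)
    (α : KVert Ω k) (hα : α ∈ C) :
    (∀ γ₁ γ₂ : KVert Ω k, (kneser Ω k).Adj α γ₁ → (kneser Ω k).Adj α γ₂ →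
      ∃ g ∈ autC C, permV g α = α ∧ permV g γ₁ = γ₂) ∧
    (∀ s t : Finset Ω, s ⊆ α.1ᶜ → t ⊆ α.1ᶜ → s.card = k → t.card = k →
      ∃ g ∈ autC C, permV g α = α ∧ s.map g.toEmbedding = t) ∧
    (∀ s t : Finset Ω, s ⊆ α.1ᶜ → t ⊆ α.1ᶜ →
      s.card = n - 2 * k → t.card = n - 2 * k →
      ∃ g ∈ autC C, permV g α = α ∧ s.map g.toEmbedding = t) :=
  stmt11_general hcard hk hkn C h1 hdelta α hα
end

section
/- Let C be a code in K(n,k) with 2 ≤ k ≤ (n−1)/2, and suppose Aut(C) acts transitively on Ω. Then for every pair of (not necessarily distinct) elements u, v ∈ Ω there exists a codeword β ∈ C with u, v ∈ Ω \ β. -/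
open Finset

/-! Fix a codeword `α`; its complement `K` has `n - k > n / 2` points. When a finite group `G`
acts transitively on `Ω`, the elements `g` with `g • u ∈ K` form the fraction `|K| / n` of `G`,
whatever `u` is. For two points `u`, `v` these two sets of elements therefore each cover more
than half of `Aut(C)` and must meet in some `g`; then `g⁻¹ • α` is a codeword avoiding `u`
and `v`. -/

section TransitiveAction

variable {G X : Type*} [Group G] [MulAction G X] [DecidableEq X]

lemma card_filter_smul_mem [Fintype X] (g : G) (K : Finset X) : #{x : X | g • x ∈ K} = #K := by
  rw [card_filter, Fintype.sum_equiv (MulAction.toPerm g) (fun x => if g • x ∈ K then 1 else 0)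
    (fun y => if y ∈ K then 1 else 0) (fun _ => rfl), ← card_filter, filter_mem_eq_inter,
    univ_inter]

variable [Fintype G] [MulAction.IsPretransitive G X]

lemma card_filter_smul_mem_eq (K : Finset X) (x y : X) :
    #{g : G | g • x ∈ K} = #{g : G | g • y ∈ K} := by
  obtain ⟨h, rfl⟩ := MulAction.exists_smul_eq G x y
  simp only [card_filter]
  exact Fintype.sum_equiv (Equiv.mulRight h⁻¹) _ _ (by simp [mul_smul])

variable [Fintype X]

lemma card_filter_smul_mem_mul_card (K : Finset X) (x : X) :
    #{g : G | g • x ∈ K} * Fintype.card X = #K * Fintype.card G := by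
  calc #{g : G | g • x ∈ K} * Fintype.card X = ∑ y : X, #{g : G | g • y ∈ K} := by
        simp [← card_filter_smul_mem_eq K x, mul_comm]
    _ = ∑ g : G, #{y : X | g • y ∈ K} := by
        simp only [card_filter]
        exact sum_comm
    _ = #K * Fintype.card G := by simp [card_filter_smul_mem, mul_comm]

lemma exists_smul_mem_and_smul_mem {K : Finset X} (hK : Fintype.card X < 2 * #K) (x y : X) :
    ∃ g : G, g • x ∈ K ∧ g • y ∈ K := by
  classical
  have hcount : Fintype.card G < #{g : G | g • x ∈ K} + #{g : G | g • y ∈ K} := by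
    refine Nat.lt_of_mul_lt_mul_right (a := Fintype.card X) ?_
    rw [add_mul, card_filter_smul_mem_mul_card, card_filter_smul_mem_mul_card, mul_comm]
    nlinarith [Fintype.card_pos (α := G)]
  obtain ⟨g, hg⟩ :=
    inter_nonempty_of_card_lt_card_add_card (subset_univ _) (subset_univ _) hcount
  simp only [mem_inter, mem_filter, mem_univ, true_and] at hg
  exact ⟨g, hg⟩

end TransitiveAction

section KneserAction

variable {Ω : Type*} [DecidableEq Ω] {k : ℕ}

instance : MulAction (Equiv.Perm Ω) (KVert Ω k) where
  smul := permV
  one_smul a := Subtype.ext (by show a.1.map _ = a.1; exact Finset.map_refl)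
  mul_smul g h a := Subtype.ext <| by
    show a.1.map _ = (a.1.map _).map _
    rw [Finset.map_map]
    rfl

lemma mem_perm_smul_val (g : Equiv.Perm Ω) (a : KVert Ω k) (x : Ω) :
    x ∈ (g • a).1 ↔ g⁻¹ x ∈ a.1 :=
  Finset.mem_map_equiv

open Pointwise in
def autGroup (C : Set (KVert Ω k)) : Subgroup (Equiv.Perm Ω) :=
  MulAction.stabilizer (Equiv.Perm Ω) C

lemma mem_autGroup {C : Set (KVert Ω k)} {g : Equiv.Perm Ω} : g ∈ autGroup C ↔ g ∈ autC C :=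
  Iff.rfl

lemma perm_smul_mem_of_mem_autC {C : Set (KVert Ω k)} {g : Equiv.Perm Ω} (hg : g ∈ autC C)
    {a : KVert Ω k} (ha : a ∈ C) : g • a ∈ C :=
  hg ▸ Set.mem_image_of_mem _ ha

lemma isPretransitive_autGroup {C : Set (KVert Ω k)}
    (htrans : ∀ x y : Ω, ∃ g ∈ autC C, g x = y) :
    MulAction.IsPretransitive (autGroup C) Ω where
  exists_smul_eq x y := by
    obtain ⟨g, hg, rfl⟩ := htrans x y
    exact ⟨⟨g, mem_autGroup.2 hg⟩, rfl⟩

end KneserAction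

theorem stmt12_general {Ω : Type*} [Fintype Ω] [DecidableEq Ω] {n k : ℕ}
    (hcard : Fintype.card Ω = n) (hkn : 2 * k + 1 ≤ n)
    (C : Set (KVert Ω k)) (hC : C.Nontrivial)
    (htrans : ∀ x y : Ω, ∃ g ∈ autC C, g x = y) :
    ∀ u v : Ω, ∃ β ∈ C, u ∉ β.1 ∧ v ∉ β.1 := by
  classical
  have := isPretransitive_autGroup htrans
  obtain ⟨α, hα⟩ := hC.nonempty
  have hα_compl : Fintype.card Ω < 2 * #α.1ᶜ := by
    rw [card_compl, α.2]
    omega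
  intro u v
  obtain ⟨g, hu, hv⟩ := exists_smul_mem_and_smul_mem (G := autGroup C) hα_compl u v
  refine ⟨(g⁻¹ : Equiv.Perm Ω) • α,
    perm_smul_mem_of_mem_autC (mem_autGroup.1 (g⁻¹).2) hα, ?_, ?_⟩
  · simpa [mem_perm_smul_val, Subgroup.smul_def] using hu
  · simpa [mem_perm_smul_val, Subgroup.smul_def] using hv

/-- if `Aut(C)` is transitive on `Ω`, every pair of points of `Ω`
lies in the complement of some codeword. -/
theorem stmt12 {Ω : Type*} [Fintype Ω] [DecidableEq Ω] {n k : ℕ}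
    (hcard : Fintype.card Ω = n) (hk : 2 ≤ k) (hkn : 2 * k + 1 ≤ n)
    (C : Set (KVert Ω k)) (hC : C.Nontrivial)
    (htrans : ∀ x y : Ω, ∃ g ∈ autC C, g x = y) :
    ∀ u v : Ω, ∃ β ∈ C, u ∉ β.1 ∧ v ∉ β.1 :=
  stmt12_general hcard hkn C hC htrans
end
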